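/- arXiv:2312.12363 — 8 statements merged into one kernel-verified Lean document; each statement's English description precedes it below -/
import Mathlib

section
/- Let V and W be finite-dimensional complex vector spaces and let φ₁, φ₂ : V × W → ℂ be bilinear maps. Let V₁ = ker_L(φ₁), W₁ = ker_R(φ₁) be the left and right kernels of φ₁, and suppose V₁ ∩ ker_L(φ₂) = 0 and W₁ ∩ ker_R(φ₂) = 0. Let r₁ = rank φ₁ and s₁ = rank of the restriction of φ₂ to V₁ × W₁. Then there exists t ∈ ℂ, t ≠ 0, such that rank(φ₁ + t·φ₂) ≥ r₁ + s₁. -/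
/-!
Choose `u i, x j` with `φ₁ (u i) (x j) = δᵢⱼ` (`r₁` of them) and, inside the kernels,
`p k, y l` with `φ₂ (p k) (y l) = δₖₗ` (`s₁` of them). Since `φ₁` vanishes on the `p k`
and on the `y l`, the Gram matrix of `φ₁ + t • φ₂` on the families `(u, t⁻¹ • p)` and `(x, y)`
has the block form `[[1 + t • B, t • C], [D, 1]]`, where `B`, `C`, `D` are blocks of the
Gram matrix of `φ₂`, with determinant
`det (1 - t • (C * D - B))`. This is the reversed characteristic polynomial of `C * D - B`
evaluated at `t`, which has value `1` at `0`, so it is nonzero for all but finitely many `t`;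
a nonsingular `(r₁ + s₁)`-square Gram matrix forces `rank (φ₁ + t • φ₂) ≥ r₁ + s₁`.
-/

open Module

open Polynomial in
theorem Matrix.eval_charpolyRev_eq_det {R n : Type*} [CommRing R] [Fintype n] [DecidableEq n]
    (M : Matrix n n R) (t : R) : M.charpolyRev.eval t = (1 - t • M).det := by
  rw [charpolyRev, ← coe_evalRingHom, RingHom.map_det, map_sub, map_one]
  congr 2
  ext i j
  simp only [RingHom.mapMatrix_apply, map_apply, smul_apply, smul_eq_mul, coe_evalRingHom,
    eval_mul, eval_X, eval_C]

open Polynomial in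
theorem Matrix.exists_ne_zero_det_one_sub_smul_ne_zero {K n : Type*} [Field K] [Infinite K]
    [Fintype n] [DecidableEq n] (M : Matrix n n K) :
    ∃ t : K, t ≠ 0 ∧ (1 - t • M).det ≠ 0 := by
  classical
  have hp : M.charpolyRev ≠ 0 := fun h => by simpa [h] using M.eval_charpolyRev
  obtain ⟨t, ht⟩ := Infinite.exists_notMem_finset (insert 0 M.charpolyRev.roots.toFinset)
  rw [Finset.mem_insert, not_or, Multiset.mem_toFinset, mem_roots hp, IsRoot.def,
    M.eval_charpolyRev_eq_det] at ht
  exact ⟨t, ht⟩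

section

variable {K V W : Type*} [Field K] [AddCommGroup V] [Module K V] [AddCommGroup W] [Module K W]

theorem Module.Dual.exists_biorthogonal_of_linearIndependent {ι : Type*} [Finite ι]
    [DecidableEq ι] {f : ι → Dual K W} (hf : LinearIndependent K f) :
    ∃ x : ι → W, ∀ i j, f i (x j) = if i = j then 1 else 0 := by
  have hcoe : LinearIndependent K fun i => ⇑(f i) :=
    hf.map' (LinearMap.ltoFun K W K K) (LinearMap.ker_eq_bot.mpr DFunLike.coe_injective)
  have hrange : LinearMap.range (LinearMap.pi f) = ⊤ := by
    rw [← span_flip_eq_top_iff_linearIndependent.mpr hcoe,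
      ← Submodule.span_eq (LinearMap.range _)]
    rfl
  choose x hx using fun j => LinearMap.range_eq_top.mp hrange (Pi.single j 1)
  exact ⟨x, fun i j => by simpa [Pi.single_apply] using congrFun (hx j) i⟩

theorem LinearMap.exists_biorthogonal [FiniteDimensional K W] (F : V →ₗ[K] W →ₗ[K] K) :
    ∃ (u : Fin (finrank K (LinearMap.range F)) → V)
      (x : Fin (finrank K (LinearMap.range F)) → W),
      ∀ i j, F (u i) (x j) = if i = j then 1 else 0 := by
  let b₀ := Basis.ofVectorSpace K (LinearMap.range F)
  let b := b₀.reindex (Fintype.equivFinOfCardEq (finrank_eq_card_basis b₀).symm)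
  have hb : LinearIndependent K fun i => (b i : W →ₗ[K] K) :=
    b.linearIndependent.map' (LinearMap.range F).subtype (LinearMap.range F).ker_subtype
  obtain ⟨x, hx⟩ := Module.Dual.exists_biorthogonal_of_linearIndependent hb
  choose u hu using fun i => (b i).2
  exact ⟨u, x, fun i j => by simpa [hu] using hx i j⟩

theorem LinearMap.card_le_finrank_range_of_det_ne_zero [FiniteDimensional K W] {ι : Type*}
    [Fintype ι] [DecidableEq ι] (F : V →ₗ[K] W →ₗ[K] K) (v : ι → V) (w : ι → W)
    (hdet : (Matrix.of fun i j => F (v i) (w j)).det ≠ 0) :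
    Fintype.card ι ≤ finrank K (LinearMap.range F) := by
  let evalAt : (W →ₗ[K] K) →ₗ[K] ι → K := LinearMap.pi fun j => LinearMap.applyₗ (w j)
  have hli : LinearIndependent K fun i => (⟨F (v i), LinearMap.mem_range_self F (v i)⟩ :
      LinearMap.range F) :=
    .of_comp (evalAt ∘ₗ (LinearMap.range F).subtype)
      (Matrix.linearIndependent_rows_of_det_ne_zero hdet)
  exact hli.fintype_card_le_finrank

open LinearMap Matrix in
theorem LinearMap.exists_ne_zero_finrank_range_add_finrank_range_domRestrict₁₂_le [Infinite K]
    [FiniteDimensional K W] (φ₁ φ₂ : V →ₗ[K] W →ₗ[K] K) :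
    ∃ t : K, t ≠ 0 ∧
      finrank K (range φ₁) + finrank K (range (φ₂.domRestrict₁₂ (ker φ₁) (ker φ₁.flip))) ≤
        finrank K (range (φ₁ + t • φ₂)) := by
  obtain ⟨u, x, hux⟩ := φ₁.exists_biorthogonal
  obtain ⟨p, y, hpy⟩ := (φ₂.domRestrict₁₂ (ker φ₁) (ker φ₁.flip)).exists_biorthogonal
  simp only [domRestrict₁₂_apply] at hpy
  have hp : ∀ k, φ₁ (p k) = 0 := fun k => (p k).2
  have hy : ∀ l v, φ₁ v (y l) = 0 := fun l => LinearMap.ext_iff.mp (y l).2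
  let B := of fun i j => φ₂ (u i) (x j)
  let C := of fun i l => φ₂ (u i) (y l)
  let D := of fun k j => φ₂ (p k) (x j)
  obtain ⟨t, ht, hdet⟩ := (C * D - B).exists_ne_zero_det_one_sub_smul_ne_zero
  refine ⟨t, ht, ?_⟩
  let v := Sum.elim u fun k => t⁻¹ • (p k : V)
  let w := Sum.elim x fun l => (y l : W)
  have hblocks :
      of (fun a b => (φ₁ + t • φ₂) (v a) (w b)) = fromBlocks (1 + t • B) (t • C) D 1 := by
    ext (i | k) (j | l) <;> simp [v, w, B, C, D, hux, hp, hy, one_apply, ht]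
    case inr.inr => exact hpy k l
  have hdet' : (of fun a b => (φ₁ + t • φ₂) (v a) (w b)).det ≠ 0 := by
    rw [hblocks, det_fromBlocks_one₂₂, smul_mul]
    convert hdet using 2
    rw [smul_sub]
    abel
  simpa using card_le_finrank_range_of_det_ne_zero (φ₁ + t • φ₂) v w hdet'

end

theorem stmt0_general {V W : Type} [AddCommGroup V] [Module ℂ V]
    [AddCommGroup W] [Module ℂ W] [FiniteDimensional ℂ W]
    (φ₁ φ₂ : V →ₗ[ℂ] W →ₗ[ℂ] ℂ) :
    ∃ t : ℂ, t ≠ 0 ∧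
      finrank ℂ (LinearMap.range φ₁) +
        finrank ℂ (LinearMap.range
          (LinearMap.domRestrict₁₂ φ₂ (LinearMap.ker φ₁) (LinearMap.ker φ₁.flip))) ≤
      finrank ℂ (LinearMap.range (φ₁ + t • φ₂)) :=
  LinearMap.exists_ne_zero_finrank_range_add_finrank_range_domRestrict₁₂_le φ₁ φ₂

/-- Lemma 2.3 of the paper: for bilinear maps `φ₁ φ₂ : V × W → ℂ` on finite-dimensional
complex vector spaces with `ker_L φ₁ ∩ ker_L φ₂ = 0` and `ker_R φ₁ ∩ ker_R φ₂ = 0`,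
there is a nonzero `t` with `rank (φ₁ + t • φ₂) ≥ r₁ + s₁`, where `r₁ = rank φ₁` and
`s₁` is the rank of the restriction of `φ₂` to `ker_L φ₁ × ker_R φ₁`. -/
theorem stmt0 {V W : Type} [AddCommGroup V] [Module ℂ V] [FiniteDimensional ℂ V]
    [AddCommGroup W] [Module ℂ W] [FiniteDimensional ℂ W]
    (φ₁ φ₂ : V →ₗ[ℂ] W →ₗ[ℂ] ℂ)
    (hV : LinearMap.ker φ₁ ⊓ LinearMap.ker φ₂ = ⊥)
    (hW : LinearMap.ker φ₁.flip ⊓ LinearMap.ker φ₂.flip = ⊥) :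
    ∃ t : ℂ, t ≠ 0 ∧
      finrank ℂ (LinearMap.range φ₁) +
        finrank ℂ (LinearMap.range
          (LinearMap.domRestrict₁₂ φ₂ (LinearMap.ker φ₁) (LinearMap.ker φ₁.flip))) ≤
      finrank ℂ (LinearMap.range (φ₁ + t • φ₂)) :=
  stmt0_general φ₁ φ₂
end

section
/- Let V and W be finite-dimensional complex vector spaces and φ₁, φ₂ : V × W → ℂ bilinear maps with ker_L(φ₁) ∩ ker_L(φ₂) = 0 and ker_R(φ₁) ∩ ker_R(φ₂) = 0. Suppose the restriction of φ₂ to ker_L(φ₁) × ker_R(φ₁) has zero left kernel (i.e., its rank s₁ equals dim V − rank φ₁). Let s₂ be the rank of the restriction of φ₁ to ker_L(φ₂) × ker_R(φ₂). Then there are at most dim V − s₁ − s₂ nonzero values of t ∈ ℂ for which rank(φ₁ + t·φ₂) < dim V. -/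
/-!
Let `π` be a projection onto `ker φ₁`. The hypothesis says that `φ₂ k ∈ range φ₁` forces `k = 0`
for `k ∈ ker φ₁`, so `v ↦ φ₁ v + φ₂ (π v)` is injective, and a left inverse `L` of it turns
`(φ₁ + t • φ₂) v = 0` into `v + t • L (φ₂ v) ∈ ker φ₁`. Since `L ∘ φ₂` fixes `ker φ₁` pointwise,
it descends to `V ⧸ ker φ₁`, and each `t ≠ 0` with `ker (φ₁ + t • φ₂) ≠ 0` makes `-t⁻¹` an
eigenvalue of the induced operator. Its nonzero eigenvalues number at most its rank, which is at
most `rank φ₂ - dim ker φ₁`; finally `s₁ = dim ker φ₁` and `s₂ ≤ dim ker φ₂`.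
-/

open Module LinearMap

section

variable {K V V' : Type*} [Field K] [AddCommGroup V] [Module K V] [AddCommGroup V'] [Module K V']

theorem Module.End.ncard_nonzero_eigenvalues_le_finrank_range [FiniteDimensional K V]
    (f : Module.End K V) : {μ | μ ≠ 0 ∧ f.HasEigenvalue μ}.ncard ≤ finrank K (range f) := by
  set S := {μ | μ ≠ 0 ∧ f.HasEigenvalue μ}
  have : Fintype S := (f.finite_hasEigenvalue.subset fun _ hμ => hμ.2).fintype
  choose x hx using fun μ : S => μ.2.2.exists_hasEigenvector
  have hx_range (μ : S) : x μ ∈ range f :=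
    ⟨(μ : K)⁻¹ • x μ, by rw [map_smul, (hx μ).apply_eq_smul, inv_smul_smul₀ μ.2.1]⟩
  have hind : LinearIndependent K fun μ => (⟨x μ, hx_range μ⟩ : range f) :=
    .of_comp (range f).subtype (f.eigenvectors_linearIndependent S x hx)
  rw [Set.ncard_eq_toFinset_card', Set.toFinset_card]
  exact hind.fintype_card_le_finrank

theorem Submodule.finrank_map_mkQ_add_finrank [FiniteDimensional K V] {p q : Submodule K V}
    (h : p ≤ q) : finrank K (q.map p.mkQ) + finrank K p = finrank K q := by
  have := finrank_range_add_finrank_ker (p.mkQ.domRestrict q)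
  rwa [range_domRestrict, ker_domRestrict, Submodule.ker_mkQ,
    (Submodule.comapSubtypeEquivOfLe h).finrank_eq] at this

namespace LinearMap

theorem finrank_range_lt_iff_ker_ne_bot [FiniteDimensional K V] (f : V →ₗ[K] V') :
    finrank K (range f) < finrank K V ↔ ker f ≠ ⊥ := by
  rw [← f.finrank_range_add_finrank_ker, lt_add_iff_pos_right, Nat.pos_iff_ne_zero, Ne,
    Submodule.finrank_eq_zero]

theorem disjoint_ker_comap_range_of_ker_domRestrict₁₂_eq_bot {R M N P : Type*}
    [CommRing R] [AddCommGroup M] [Module R M] [AddCommGroup N] [Module R N]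
    [AddCommGroup P] [Module R P] {φ₁ φ₂ : M →ₗ[R] N →ₗ[R] P}
    (h : ker (φ₂.domRestrict₁₂ (ker φ₁) (ker φ₁.flip)) = ⊥) :
    Disjoint (ker φ₁) ((range φ₁).comap φ₂) := by
  refine Submodule.disjoint_def.2 fun v hv ⟨u, hu⟩ => ?_
  have hv' : (⟨v, hv⟩ : ker φ₁) ∈ ker (φ₂.domRestrict₁₂ (ker φ₁) (ker φ₁.flip)) := by
    ext ⟨w, hw⟩
    simp only [domRestrict₁₂_apply, ← hu, zero_apply]
    exact congrFun (congrArg DFunLike.coe (mem_ker.1 hw)) u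
  simpa [h] using hv'

variable {ψ₁ ψ₂ : V →ₗ[K] V'}

theorem exists_leftInverse_of_disjoint_ker_comap_range
    (h : Disjoint (ker ψ₁) ((range ψ₁).comap ψ₂)) :
    ∃ L : V' →ₗ[K] V, (∀ k ∈ ker ψ₁, L (ψ₂ k) = k) ∧ ∀ v, v - L (ψ₁ v) ∈ ker ψ₁ := by
  set P := (ker ψ₁).subtype.leftInverse
  have hP (k : ker ψ₁) : P k = k := leftInverse_apply_of_inj (ker ψ₁).ker_subtype k
  set N := ψ₁ + ψ₂ ∘ₗ (ker ψ₁).subtype ∘ₗ P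
  have hN : ker N = ⊥ := by
    refine (Submodule.eq_bot_iff _).2 fun v hv => ?_
    have hPv : (P v : V) = 0 := by
      refine Submodule.disjoint_def.1 h _ (P v).2 ⟨-v, ?_⟩
      rw [map_neg]
      exact (eq_neg_of_add_eq_zero_right hv).symm
    have hv₁ : v ∈ ker ψ₁ := by simpa [N, hPv] using hv
    simpa [hP ⟨v, hv₁⟩] using hPv
  have hL₂ (k : V) (hk : k ∈ ker ψ₁) : N.leftInverse (ψ₂ k) = k := by
    simpa [N, hP ⟨k, hk⟩, mem_ker.1 hk] using leftInverse_apply_of_inj hN k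
  refine ⟨N.leftInverse, hL₂, fun v => ?_⟩
  have hv : N.leftInverse (ψ₁ v) + P v = v := by
    simpa [N, hL₂ _ (P v).2] using leftInverse_apply_of_inj hN v
  rw [← eq_sub_iff_add_eq'.2 hv]
  exact (P v).2

section AdaptedLeftInverse

variable {L : V' →ₗ[K] V} (hL₂ : ∀ k ∈ ker ψ₁, L (ψ₂ k) = k)
include hL₂

theorem ker_le_comap_comp_of_leftInverse_on_ker : ker ψ₁ ≤ (ker ψ₁).comap (L ∘ₗ ψ₂) :=
  fun k hk => by simpa [hL₂ k hk] using hk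

theorem hasEigenvalue_mapQ_of_ker_ne_bot (hL₁ : ∀ v, v - L (ψ₁ v) ∈ ker ψ₁) {t : K} (ht : t ≠ 0)
    (hker : ker (ψ₁ + t • ψ₂) ≠ ⊥) :
    Module.End.HasEigenvalue
      ((ker ψ₁).mapQ (ker ψ₁) (L ∘ₗ ψ₂) (ker_le_comap_comp_of_leftInverse_on_ker hL₂)) (-t⁻¹) := by
  obtain ⟨v, hv, hv0⟩ := (Submodule.ne_bot_iff _).1 hker
  have hv' : ψ₁ v = -(t • ψ₂ v) := eq_neg_of_add_eq_zero_left hv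
  have hv_notMem : v ∉ ker ψ₁ := fun hv₁ => by
    have : ψ₂ v = 0 := by simpa [mem_ker.1 hv₁, ht] using hv'
    exact hv0 (by simpa [this] using (hL₂ v hv₁).symm)
  refine Module.End.hasEigenvalue_of_hasEigenvector (x := (ker ψ₁).mkQ v)
    ⟨Module.End.mem_eigenspace_iff.2 ?_, by simpa using hv_notMem⟩
  have key : t⁻¹ • (v - L (ψ₁ v)) ∈ ker ψ₁ := (ker ψ₁).smul_mem _ (hL₁ v)
  simp only [Submodule.mapQ_apply, Submodule.mkQ_apply, coe_comp, Function.comp_apply]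
  rw [← Submodule.Quotient.mk_smul, Submodule.Quotient.eq]
  convert key using 1
  rw [hv', map_neg, map_smul, smul_sub, smul_neg, inv_smul_smul₀ ht, neg_smul]
  abel

theorem finrank_range_mapQ_le [FiniteDimensional K V] :
    finrank K (range ((ker ψ₁).mapQ (ker ψ₁) (L ∘ₗ ψ₂)
      (ker_le_comap_comp_of_leftInverse_on_ker hL₂))) ≤
      finrank K (range ψ₂) - finrank K (ker ψ₁) := by
  have hker_le : ker ψ₁ ≤ range (L ∘ₗ ψ₂) := fun k hk => ⟨k, hL₂ k hk⟩
  have hquot := Submodule.finrank_map_mkQ_add_finrank hker_le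
  have hcomp : finrank K (range (L ∘ₗ ψ₂)) ≤ finrank K (range ψ₂) := by
    rw [range_comp]
    exact Submodule.finrank_map_le L _
  rw [Submodule.range_mapQ]
  omega

end AdaptedLeftInverse

theorem finite_and_ncard_le_of_disjoint_ker_comap_range [FiniteDimensional K V]
    (h : Disjoint (ker ψ₁) ((range ψ₁).comap ψ₂)) :
    {t : K | t ≠ 0 ∧ ker (ψ₁ + t • ψ₂) ≠ ⊥}.Finite ∧
    {t : K | t ≠ 0 ∧ ker (ψ₁ + t • ψ₂) ≠ ⊥}.ncard ≤ finrank K (range ψ₂) - finrank K (ker ψ₁) := by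
  obtain ⟨L, hL₂, hL₁⟩ := exists_leftInverse_of_disjoint_ker_comap_range h
  set f : Module.End K (V ⧸ ker ψ₁) :=
    (ker ψ₁).mapQ (ker ψ₁) (L ∘ₗ ψ₂) (ker_le_comap_comp_of_leftInverse_on_ker hL₂)
  set E := {μ | μ ≠ 0 ∧ f.HasEigenvalue μ}
  have hE : E.Finite := f.finite_hasEigenvalue.subset fun _ hμ => hμ.2
  have hsub : {t : K | t ≠ 0 ∧ ker (ψ₁ + t • ψ₂) ≠ ⊥} ⊆ (fun μ => -μ⁻¹) '' E :=
    fun t ⟨ht, hker⟩ => ⟨-t⁻¹, ⟨by simpa using ht,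
      hasEigenvalue_mapQ_of_ker_ne_bot hL₂ hL₁ ht hker⟩, by simp⟩
  refine ⟨(hE.image _).subset hsub, ?_⟩
  calc _ ≤ ((fun μ => -μ⁻¹) '' E).ncard := Set.ncard_le_ncard hsub (hE.image _)
    _ ≤ E.ncard := Set.ncard_image_le hE
    _ ≤ finrank K (range f) := f.ncard_nonzero_eigenvalues_le_finrank_range
    _ ≤ _ := finrank_range_mapQ_le hL₂

end LinearMap

end

theorem stmt1_general {V W : Type} [AddCommGroup V] [Module ℂ V] [FiniteDimensional ℂ V]
    [AddCommGroup W] [Module ℂ W] [FiniteDimensional ℂ W]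
    (φ₁ φ₂ : V →ₗ[ℂ] W →ₗ[ℂ] ℂ)
    (hs₁ : LinearMap.ker
      (LinearMap.domRestrict₁₂ φ₂ (LinearMap.ker φ₁) (LinearMap.ker φ₁.flip)) = ⊥) :
    {t : ℂ | t ≠ 0 ∧ finrank ℂ (LinearMap.range (φ₁ + t • φ₂)) < finrank ℂ V}.Finite ∧
    {t : ℂ | t ≠ 0 ∧ finrank ℂ (LinearMap.range (φ₁ + t • φ₂)) < finrank ℂ V}.ncard ≤
      finrank ℂ V -
        finrank ℂ (LinearMap.range
          (LinearMap.domRestrict₁₂ φ₂ (LinearMap.ker φ₁) (LinearMap.ker φ₁.flip))) -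
        finrank ℂ (LinearMap.range
          (LinearMap.domRestrict₁₂ φ₁ (LinearMap.ker φ₂) (LinearMap.ker φ₂.flip))) := by
  simp only [finrank_range_lt_iff_ker_ne_bot]
  obtain ⟨hfin, hcard⟩ := finite_and_ncard_le_of_disjoint_ker_comap_range
    (disjoint_ker_comap_range_of_ker_domRestrict₁₂_eq_bot hs₁)
  have hs₁_eq := finrank_range_add_finrank_ker (φ₂.domRestrict₁₂ (ker φ₁) (ker φ₁.flip))
  rw [hs₁, finrank_bot] at hs₁_eq
  have hs₂_le := finrank_range_le (φ₁.domRestrict₁₂ (ker φ₂) (ker φ₂.flip))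
  have hφ₂ := finrank_range_add_finrank_ker φ₂
  exact ⟨hfin, by omega⟩

/-- Lemma 2.4 of the paper: if moreover the restriction of `φ₂` to
`ker_L φ₁ × ker_R φ₁` has zero left kernel, then there are at most
`dim V - s₁ - s₂` nonzero values of `t` for which `rank (φ₁ + t • φ₂) < dim V`. -/
theorem stmt1 {V W : Type} [AddCommGroup V] [Module ℂ V] [FiniteDimensional ℂ V]
    [AddCommGroup W] [Module ℂ W] [FiniteDimensional ℂ W]
    (φ₁ φ₂ : V →ₗ[ℂ] W →ₗ[ℂ] ℂ)
    (hV : LinearMap.ker φ₁ ⊓ LinearMap.ker φ₂ = ⊥)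
    (hW : LinearMap.ker φ₁.flip ⊓ LinearMap.ker φ₂.flip = ⊥)
    (hs₁ : LinearMap.ker
      (LinearMap.domRestrict₁₂ φ₂ (LinearMap.ker φ₁) (LinearMap.ker φ₁.flip)) = ⊥) :
    {t : ℂ | t ≠ 0 ∧ finrank ℂ (LinearMap.range (φ₁ + t • φ₂)) < finrank ℂ V}.Finite ∧
    {t : ℂ | t ≠ 0 ∧ finrank ℂ (LinearMap.range (φ₁ + t • φ₂)) < finrank ℂ V}.ncard ≤
      finrank ℂ V -
        finrank ℂ (LinearMap.range
          (LinearMap.domRestrict₁₂ φ₂ (LinearMap.ker φ₁) (LinearMap.ker φ₁.flip))) -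
        finrank ℂ (LinearMap.range
          (LinearMap.domRestrict₁₂ φ₁ (LinearMap.ker φ₂) (LinearMap.ker φ₂.flip))) :=
  stmt1_general φ₁ φ₂ hs₁
end

section
/- Let V and W be finite-dimensional complex vector spaces and φ₁, φ₂ : V × W → ℂ bilinear maps. Set Vᵢ = ker_L(φᵢ), Wᵢ = ker_R(φᵢ), and assume V₁ ∩ V₂ = 0 and W₁ ∩ W₂ = 0. Let rᵢ = rank φᵢ. Then for {i,j} = {1,2}, the left kernel of the restriction of φⱼ to Vᵢ × Wᵢ has dimension at most r₁ + r₂ − dim W. -/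
/-!
Let `L : V → (ker φ₁.flip)*` send `v` to `φ₂(v, ·)` restricted to `W₁ = ker φ₁.flip`. Since
`W₁ ∩ W₂ = 0`, the transpose of `L` is injective, so `rank L = dim W₁ = dim W - r₁`. The kernel
in question is `V₁ ∩ ker L`, and `ker L` also contains `V₂`, which meets `V₁` trivially; hence
`dim (V₁ ∩ ker L) + (dim V - r₂) ≤ dim ker L = dim V - dim W + r₁`.
-/

open Module

namespace Submodule

variable {K V : Type*} [Field K] [AddCommGroup V] [Module K V]

theorem finrank_comap_subtype (p q : Submodule K V) :
    finrank K (q.comap p.subtype) = finrank K ↥(p ⊓ q) := by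
  rw [← map_comap_subtype]
  exact (equivSubtypeMap p _).finrank_eq

theorem finrank_inf_add_finrank_le [FiniteDimensional K V] {p q r : Submodule K V}
    (hrq : r ≤ q) (hpr : Disjoint p r) :
    finrank K ↥(p ⊓ q) + finrank K r ≤ finrank K q := by
  have hsum := finrank_sup_add_finrank_inf_eq (p ⊓ q) r
  rw [(hpr.mono_left inf_le_left).eq_bot, finrank_bot, add_zero] at hsum
  exact hsum ▸ finrank_mono (sup_le inf_le_right hrq)

end Submodule

namespace LinearMap

theorem ker_domRestrict₁₂ {R M N P : Type*} [CommRing R] [AddCommGroup M] [Module R M]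
    [AddCommGroup N] [Module R N] [AddCommGroup P] [Module R P]
    (B : M →ₗ[R] N →ₗ[R] P) (p : Submodule R M) (q : Submodule R N) :
    ker (B.domRestrict₁₂ p q) = (ker (B.compl₂ q.subtype)).comap p.subtype := by
  ext
  simp [LinearMap.ext_iff, domRestrict₁₂_apply]

variable {K V W : Type*} [Field K] [AddCommGroup V] [Module K V]
  [AddCommGroup W] [Module K W] [FiniteDimensional K W]

theorem finrank_range_flip (B : V →ₗ[K] W →ₗ[K] K) :
    finrank K (range B.flip) = finrank K (range B) := by
  have hflip : B.flip = B.dualMap ∘ₗ Dual.eval K W := by ext; rfl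
  rw [hflip, range_comp, ← evalEquiv_toLinearMap, LinearEquiv.range, Submodule.map_top,
    finrank_range_dualMap_eq_finrank_range]

theorem finrank_ker_flip_add_finrank_range (B : V →ₗ[K] W →ₗ[K] K) :
    finrank K (ker B.flip) + finrank K (range B) = finrank K W := by
  rw [← finrank_range_flip, add_comm, finrank_range_add_finrank_ker]

theorem finrank_range_compl₂_subtype {B : V →ₗ[K] W →ₗ[K] K} {Q : Submodule K W}
    (hQ : Disjoint Q (ker B.flip)) :
    finrank K (range (B.compl₂ Q.subtype)) = finrank K Q := by
  have hker : ker (B.compl₂ Q.subtype).flip = ⊥ :=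
    eq_bot_iff.mpr fun w hw => Subtype.ext (hQ.le_bot ⟨w.2, hw⟩)
  have := finrank_range_add_finrank_ker (B.compl₂ Q.subtype).flip
  rwa [hker, finrank_bot, add_zero, finrank_range_flip] at this

theorem finrank_ker_domRestrict₁₂_add_finrank_le [FiniteDimensional K V]
    {B₁ B₂ : V →ₗ[K] W →ₗ[K] K}
    (hV : Disjoint (ker B₁) (ker B₂)) (hW : Disjoint (ker B₁.flip) (ker B₂.flip)) :
    finrank K (ker (B₂.domRestrict₁₂ (ker B₁) (ker B₁.flip))) + finrank K W ≤
      finrank K (range B₁) + finrank K (range B₂) := by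
  set L := B₂.compl₂ (ker B₁.flip).subtype
  have hK : finrank K (ker (B₂.domRestrict₁₂ (ker B₁) (ker B₁.flip))) =
      finrank K ↥(ker B₁ ⊓ ker L) := by
    rw [ker_domRestrict₁₂, Submodule.finrank_comap_subtype]
  have hker : ker B₂ ≤ ker L := fun v hv => by ext; simp [L, mem_ker.1 hv]
  have hL := finrank_range_add_finrank_ker L
  rw [finrank_range_compl₂_subtype hW] at hL
  have := Submodule.finrank_inf_add_finrank_le hker hV
  have := finrank_range_add_finrank_ker B₂
  have := finrank_ker_flip_add_finrank_range B₁
  omega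

end LinearMap

/-- Lemma 2.6 of the paper: with `V₁ ∩ V₂ = 0` and `W₁ ∩ W₂ = 0`, for `{i,j} = {1,2}`
the left kernel of the restriction of `φⱼ` to `Vᵢ × Wᵢ` has dimension at most
`r₁ + r₂ - dim W`. -/
theorem stmt2 {V W : Type} [AddCommGroup V] [Module ℂ V] [FiniteDimensional ℂ V]
    [AddCommGroup W] [Module ℂ W] [FiniteDimensional ℂ W]
    (φ₁ φ₂ : V →ₗ[ℂ] W →ₗ[ℂ] ℂ)
    (hV : LinearMap.ker φ₁ ⊓ LinearMap.ker φ₂ = ⊥)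
    (hW : LinearMap.ker φ₁.flip ⊓ LinearMap.ker φ₂.flip = ⊥) :
    finrank ℂ (LinearMap.ker
        (LinearMap.domRestrict₁₂ φ₂ (LinearMap.ker φ₁) (LinearMap.ker φ₁.flip))) ≤
      finrank ℂ (LinearMap.range φ₁) + finrank ℂ (LinearMap.range φ₂) - finrank ℂ W ∧
    finrank ℂ (LinearMap.ker
        (LinearMap.domRestrict₁₂ φ₁ (LinearMap.ker φ₂) (LinearMap.ker φ₂.flip))) ≤
      finrank ℂ (LinearMap.range φ₁) + finrank ℂ (LinearMap.range φ₂) - finrank ℂ W := by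
  have hV' := disjoint_iff.mpr hV
  have hW' := disjoint_iff.mpr hW
  have h₁₂ := LinearMap.finrank_ker_domRestrict₁₂_add_finrank_le hV' hW'
  have h₂₁ := LinearMap.finrank_ker_domRestrict₁₂_add_finrank_le hV'.symm hW'.symm
  omega
end

section
/- Let S = ℂ[x₀,…,xₙ] and let I ⊆ S be a homogeneous ideal such that A = S/I is a graded Artinian Gorenstein algebra of socle degree t (i.e., A_t ≅ ℂ, A_s = 0 for s > t, and the multiplication pairings A_e × A_{t−e} → A_t ≅ ℂ are perfect for all 0 ≤ e ≤ t). Let J ⊆ S be a homogeneous ideal and let 0 ≤ α ≤ t − 1 be an integer. If the left kernel of the multiplication pairing μ_α : ((J+I)/I)_α × ((J+I)/I)_{t−α} → A_t is nonzero, then the left kernel of μ_{α+1} : ((J+I)/I)_{α+1} × ((J+I)/I)_{t−α−1} → A_t is also nonzero. -/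
/-!
A nonzero `f ∈ ((J+I)/I)_α` in the left kernel of `μ_α` pairs nontrivially with some
`b ∈ A_{t-α}` by Gorenstein duality. Since `t - α ≥ 1`, `b` is a combination of multiples of the
variables, so `f * xᵢ ≠ 0` for some variable `xᵢ`. Then `xᵢ f` is a nonzero element of
`((J+I)/I)_{α+1}`, and it lies in the left kernel of `μ_{α+1}` because `(xᵢ f) g = f (xᵢ g)` with
`xᵢ g ∈ ((J+I)/I)_{t-α}`.
-/

open MvPolynomial Module

/-- The degree-`e` graded piece of `S ⧸ K`, realized as the image of the homogeneous
degree-`e` polynomials in the quotient. -/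
noncomputable def qpiece {n : ℕ} (K : Ideal (MvPolynomial (Fin n) ℂ)) (e : ℕ) :
    Submodule ℂ (MvPolynomial (Fin n) ℂ ⧸ K) :=
  (MvPolynomial.homogeneousSubmodule (Fin n) ℂ e).map (Ideal.Quotient.mkₐ ℂ K).toLinearMap

/-- The degree-`e` piece of the image `(J+I)/I` of an ideal `J` in `S ⧸ I`. -/
noncomputable def bpiece {n : ℕ} (I J : Ideal (MvPolynomial (Fin n) ℂ)) (e : ℕ) :
    Submodule ℂ (MvPolynomial (Fin n) ℂ ⧸ I) :=
  ((Submodule.restrictScalars ℂ (J ⊔ I)) ⊓ MvPolynomial.homogeneousSubmodule (Fin n) ℂ e).map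
    (Ideal.Quotient.mkₐ ℂ I).toLinearMap

namespace MvPolynomial

variable {σ R B : Type*} [CommRing R] [CommRing B]

theorem IsHomogeneous.mem_pow_idealOfVars {p : MvPolynomial σ R} {d : ℕ}
    (hp : p.IsHomogeneous d) : p ∈ idealOfVars σ R ^ d :=
  (mem_pow_idealOfVars_iff d p).2 fun _ hx ↦
    (Finsupp.degree_eq_weight_one (R := ℕ) ▸ hp (mem_support_iff.1 hx)).ge

theorem mul_eq_zero_of_mem_idealOfVars (φ : MvPolynomial σ R →+* B) {a : B}
    (ha : ∀ i, a * φ (X i) = 0) {p : MvPolynomial σ R} (hp : p ∈ idealOfVars σ R) :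
    a * φ p = 0 := by
  suffices idealOfVars σ R ≤ ((⊥ : Ideal B).colon {a}).comap φ by
    simpa [mul_comm] using this hp
  refine Ideal.span_le.2 (Set.range_subset_iff.2 fun i ↦ ?_)
  simpa [mul_comm] using ha i

/-- With `φ` the quotient map, this is the fact that a nonzero element of degree below the socle
degree is not annihilated by all linear forms. -/
theorem exists_mul_X_ne_zero_of_isHomogeneous (φ : MvPolynomial σ R →+* B) {a : B}
    {p : MvPolynomial σ R} {d : ℕ} (hp : p.IsHomogeneous d) (hd : d ≠ 0) (hap : a * φ p ≠ 0) :
    ∃ i, a * φ (X i) ≠ 0 := by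
  by_contra! ha
  exact hap <| mul_eq_zero_of_mem_idealOfVars φ ha <| Ideal.pow_le_self hd hp.mem_pow_idealOfVars

end MvPolynomial

section Pieces

variable {n : ℕ} (I J : Ideal (MvPolynomial (Fin n) ℂ))

theorem bpiece_le_qpiece (e : ℕ) : bpiece I J e ≤ qpiece I e :=
  Submodule.map_mono inf_le_right

theorem mk_X_mul_mem_bpiece {e : ℕ} (i : Fin n) {g : MvPolynomial (Fin n) ℂ ⧸ I}
    (hg : g ∈ bpiece I J e) : Ideal.Quotient.mk I (X i) * g ∈ bpiece I J (e + 1) := by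
  obtain ⟨k, ⟨hkJ, hk⟩, rfl⟩ := Submodule.mem_map.1 hg
  refine Submodule.mem_map.2 ⟨k * X i, ⟨?_, ?_⟩, ?_⟩
  · exact (J ⊔ I).mul_mem_right (X i) hkJ
  · exact IsHomogeneous.mul (φ := k) hk (isHomogeneous_X ℂ i)
  · simp [mul_comm]

end Pieces

theorem stmt4_general {n t : ℕ} (I J : Ideal (MvPolynomial (Fin (n + 1)) ℂ))
    (hperfL : ∀ e ≤ t, ∀ a ∈ qpiece I e, a ≠ 0 → ∃ b ∈ qpiece I (t - e), a * b ≠ 0)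
    (α : ℕ) (hα : α + 1 ≤ t)
    (hker : ∃ f ∈ bpiece I J α, f ≠ 0 ∧ ∀ g ∈ bpiece I J (t - α), f * g = 0) :
    ∃ f ∈ bpiece I J (α + 1), f ≠ 0 ∧ ∀ g ∈ bpiece I J (t - α - 1), f * g = 0 := by
  obtain ⟨f, hf, hf0, hfker⟩ := hker
  obtain ⟨b, hb, hfb⟩ := hperfL α (by omega) f (bpiece_le_qpiece I J α hf) hf0
  obtain ⟨p, hp, rfl⟩ := Submodule.mem_map.1 hb
  obtain ⟨i, hi⟩ := exists_mul_X_ne_zero_of_isHomogeneous (Ideal.Quotient.mk I) hp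
    (by omega) hfb
  refine ⟨_, mk_X_mul_mem_bpiece I J i hf, by rwa [mul_comm], fun g hg ↦ ?_⟩
  have hXg := mk_X_mul_mem_bpiece I J i hg
  rw [show t - α - 1 + 1 = t - α by omega] at hXg
  rw [mul_comm _ f, mul_assoc]
  exact hfker _ hXg

/-- Lemma 2.8 of the paper: let `A = S/I` be a graded Artinian Gorenstein algebra of socle
degree `t` and `J` a homogeneous ideal. If the left kernel of the multiplication pairing
`((J+I)/I)_α × ((J+I)/I)_{t−α} → A_t` is nonzero (for `0 ≤ α ≤ t−1`), then so is the left
kernel of `((J+I)/I)_{α+1} × ((J+I)/I)_{t−α−1} → A_t`. -/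
theorem stmt4 {n t : ℕ} (I J : Ideal (MvPolynomial (Fin (n + 1)) ℂ))
    (hI : ∀ f ∈ I, ∀ e : ℕ, MvPolynomial.homogeneousComponent e f ∈ I)
    (hJ : ∀ f ∈ J, ∀ e : ℕ, MvPolynomial.homogeneousComponent e f ∈ J)
    (hsoc : finrank ℂ (qpiece I t) = 1)
    (hvan : ∀ s : ℕ, t < s → qpiece I s = ⊥)
    (hperfL : ∀ e ≤ t, ∀ a ∈ qpiece I e, a ≠ 0 → ∃ b ∈ qpiece I (t - e), a * b ≠ 0)
    (hperfR : ∀ e ≤ t, ∀ b ∈ qpiece I (t - e), b ≠ 0 → ∃ a ∈ qpiece I e, a * b ≠ 0)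
    (α : ℕ) (hα : α + 1 ≤ t)
    (hker : ∃ f ∈ bpiece I J α, f ≠ 0 ∧ ∀ g ∈ bpiece I J (t - α), f * g = 0) :
    ∃ f ∈ bpiece I J (α + 1), f ≠ 0 ∧ ∀ g ∈ bpiece I J (t - α - 1), f * g = 0 :=
  stmt4_general I J hperfL α hα hker
end

section
/- Let S = ℂ[x₀,…,xₙ], and let I₁, I₂ ⊆ S be homogeneous ideals such that S/I₁ and S/I₂ are graded Artinian Gorenstein algebras of the same socle degree t. Fix isomorphisms σⱼ : (S/Iⱼ)_t → ℂ, and for an integer α define bilinear maps φⱼ : (S/(I₁∩I₂))_α × (S/(I₁∩I₂))_{t−α} → ℂ by φⱼ(f,g) = σⱼ(fg mod Iⱼ). If (S/(I₁+I₂))_{t−α} = 0, then for every nonzero λ ∈ ℂ the left kernel of φ₁ + λ·φ₂ is zero. -/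
/-!
Since every form of degree `t - α` is `p + q` with `p ∈ I₁`, `q ∈ I₂` homogeneous, and `f p ∈ I₁`,
`f q ∈ I₂`, the vanishing of `φ₁ + λ φ₂` at `(f, p)` and `(f, q)` forces `φ₁(f, ·)` and
`φ₂(f, ·)` to vanish separately on `(S/(I₁ ∩ I₂))_{t-α}`. Since `σⱼ` is injective on the socle,
`f g ∈ Iⱼ` for every such `g`, and the perfect pairing of `S/Iⱼ` gives `f ∈ Iⱼ`.
-/

open MvPolynomial Module

theorem LinearMap.sup_le_ker_inf_ker_of_le_ker_add_smul {K M V : Type*} [Field K]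
    [AddCommGroup M] [Module K M] [AddCommGroup V] [Module K V]
    {ψ₁ ψ₂ : M →ₗ[K] V} {N₁ N₂ : Submodule K M} {c : K} (hc : c ≠ 0)
    (h₁ : N₁ ≤ LinearMap.ker ψ₁) (h₂ : N₂ ≤ LinearMap.ker ψ₂)
    (h : N₁ ⊔ N₂ ≤ LinearMap.ker (ψ₁ + c • ψ₂)) :
    N₁ ⊔ N₂ ≤ LinearMap.ker ψ₁ ⊓ LinearMap.ker ψ₂ := by
  have hsum : ∀ x ∈ N₁ ⊔ N₂, ψ₁ x + c • ψ₂ x = 0 := fun x hx => h hx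
  refine sup_le (le_inf h₁ fun x hx => ?_) (le_inf (fun x hx => ?_) h₂)
  · have := hsum x (Submodule.mem_sup_left hx)
    rw [LinearMap.mem_ker.mp (h₁ hx), zero_add, smul_eq_zero] at this
    exact this.resolve_left hc
  · have := hsum x (Submodule.mem_sup_right hx)
    rwa [LinearMap.mem_ker.mp (h₂ hx), smul_zero, add_zero] at this

namespace MvPolynomial

theorem mem_sup_inf_homogeneousSubmodule_of_mem_sup {σ R : Type*} [CommSemiring R]
    {I₁ I₂ : Ideal (MvPolynomial σ R)}
    (hI₁ : ∀ f ∈ I₁, ∀ e : ℕ, homogeneousComponent e f ∈ I₁)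
    (hI₂ : ∀ f ∈ I₂, ∀ e : ℕ, homogeneousComponent e f ∈ I₂)
    {d : ℕ} {g : MvPolynomial σ R} (hg : g ∈ homogeneousSubmodule σ R d) (hg' : g ∈ I₁ ⊔ I₂) :
    g ∈ (homogeneousSubmodule σ R d ⊓ I₁.restrictScalars R) ⊔
      (homogeneousSubmodule σ R d ⊓ I₂.restrictScalars R) := by
  obtain ⟨p, hp, q, hq, rfl⟩ := Submodule.mem_sup.mp hg'
  have hpq : homogeneousComponent d p + homogeneousComponent d q = p + q := by
    rw [← map_add, homogeneousComponent_of_mem hg, if_pos rfl]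
  rw [← hpq]
  exact Submodule.add_mem_sup
    ⟨homogeneousComponent_isHomogeneous d p, hI₁ p hp d⟩
    ⟨homogeneousComponent_isHomogeneous d q, hI₂ q hq d⟩

end MvPolynomial

theorem mem_of_qpiece_eq_bot {n d : ℕ} {K : Ideal (MvPolynomial (Fin n) ℂ)}
    (h : qpiece K d = ⊥) {g : MvPolynomial (Fin n) ℂ}
    (hg : g ∈ homogeneousSubmodule (Fin n) ℂ d) : g ∈ K := by
  have hmem : Ideal.Quotient.mk K g ∈ qpiece K d := Submodule.mem_map_of_mem hg
  rw [h, Submodule.mem_bot] at hmem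
  exact Ideal.Quotient.eq_zero_iff_mem.mp hmem

theorem mem_of_forall_pairing_eq_zero {n t α : ℕ} {I : Ideal (MvPolynomial (Fin n) ℂ)}
    (hperf : ∀ a ∈ qpiece I α, a ≠ 0 → ∃ b ∈ qpiece I (t - α), a * b ≠ 0)
    {σ : (MvPolynomial (Fin n) ℂ ⧸ I) →ₗ[ℂ] ℂ} (hσ : ∀ a ∈ qpiece I t, σ a = 0 → a = 0)
    (hα : α ≤ t) {f : MvPolynomial (Fin n) ℂ} (hf : f ∈ homogeneousSubmodule (Fin n) ℂ α)
    (h : ∀ g ∈ homogeneousSubmodule (Fin n) ℂ (t - α), σ (Ideal.Quotient.mk I (f * g)) = 0) :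
    f ∈ I := by
  by_contra hfI
  obtain ⟨_, ⟨g, hg, rfl⟩, hfg⟩ := hperf _ (Submodule.mem_map_of_mem hf)
    (mt Ideal.Quotient.eq_zero_iff_mem.mp hfI)
  refine hfg (hσ _ ?_ (h g hg))
  have hdeg : (f * g).IsHomogeneous t := by
    simpa [Nat.add_sub_cancel' hα] using (mem_homogeneousSubmodule _ _).mp hf |>.mul hg
  exact Submodule.mem_map_of_mem (p := homogeneousSubmodule _ ℂ t) hdeg

theorem stmt5_general {n t : ℕ} (I₁ I₂ : Ideal (MvPolynomial (Fin (n + 1)) ℂ))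
    (hI₁ : ∀ f ∈ I₁, ∀ e : ℕ, MvPolynomial.homogeneousComponent e f ∈ I₁)
    (hI₂ : ∀ f ∈ I₂, ∀ e : ℕ, MvPolynomial.homogeneousComponent e f ∈ I₂)
    (hperf₁L : ∀ e ≤ t, ∀ a ∈ qpiece I₁ e, a ≠ 0 → ∃ b ∈ qpiece I₁ (t - e), a * b ≠ 0)
    (hperf₂L : ∀ e ≤ t, ∀ a ∈ qpiece I₂ e, a ≠ 0 → ∃ b ∈ qpiece I₂ (t - e), a * b ≠ 0)
    (σ₁ : (MvPolynomial (Fin (n + 1)) ℂ ⧸ I₁) →ₗ[ℂ] ℂ)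
    (σ₂ : (MvPolynomial (Fin (n + 1)) ℂ ⧸ I₂) →ₗ[ℂ] ℂ)
    (hσ₁ : ∀ a ∈ qpiece I₁ t, σ₁ a = 0 → a = 0)
    (hσ₂ : ∀ a ∈ qpiece I₂ t, σ₂ a = 0 → a = 0)
    (α : ℕ) (hα : α ≤ t)
    (hvansum : qpiece (I₁ ⊔ I₂) (t - α) = ⊥)
    (lam : ℂ) (hlam : lam ≠ 0) :
    ∀ f ∈ MvPolynomial.homogeneousSubmodule (Fin (n + 1)) ℂ α,
      (∀ g ∈ MvPolynomial.homogeneousSubmodule (Fin (n + 1)) ℂ (t - α),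
        σ₁ (Ideal.Quotient.mk I₁ (f * g)) + lam * σ₂ (Ideal.Quotient.mk I₂ (f * g)) = 0) →
      f ∈ I₁ ⊓ I₂ := by
  intro f hf hpair
  let ψ₁ := σ₁ ∘ₗ (Ideal.Quotient.mkₐ ℂ I₁).toLinearMap ∘ₗ LinearMap.mulLeft ℂ f
  let ψ₂ := σ₂ ∘ₗ (Ideal.Quotient.mkₐ ℂ I₂).toLinearMap ∘ₗ LinearMap.mulLeft ℂ f
  let D := homogeneousSubmodule (Fin (n + 1)) ℂ (t - α)
  have hsplit : D ≤ (D ⊓ I₁.restrictScalars ℂ) ⊔ (D ⊓ I₂.restrictScalars ℂ) := fun g hg =>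
    mem_sup_inf_homogeneousSubmodule_of_mem_sup hI₁ hI₂ hg (mem_of_qpiece_eq_bot hvansum hg)
  have hker := LinearMap.sup_le_ker_inf_ker_of_le_ker_add_smul (ψ₁ := ψ₁) (ψ₂ := ψ₂)
    (N₁ := D ⊓ I₁.restrictScalars ℂ) (N₂ := D ⊓ I₂.restrictScalars ℂ) hlam
    (fun g hg => show σ₁ (Ideal.Quotient.mk I₁ (f * g)) = 0 by
      rw [Ideal.Quotient.eq_zero_iff_mem.mpr (I₁.mul_mem_left f hg.2), map_zero])
    (fun g hg => show σ₂ (Ideal.Quotient.mk I₂ (f * g)) = 0 by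
      rw [Ideal.Quotient.eq_zero_iff_mem.mpr (I₂.mul_mem_left f hg.2), map_zero])
    (fun g hg => hpair g ((sup_le inf_le_left inf_le_left : _ ≤ D) hg))
  exact ⟨mem_of_forall_pairing_eq_zero (hperf₁L α hα) hσ₁ hα hf fun g hg => (hker (hsplit hg)).1,
    mem_of_forall_pairing_eq_zero (hperf₂L α hα) hσ₂ hα hf fun g hg => (hker (hsplit hg)).2⟩

/-- Lemma 2.7 of the paper: let `S/I₁`, `S/I₂` be graded Artinian Gorenstein algebras of the
same socle degree `t`, with chosen isomorphisms `σⱼ : (S/Iⱼ)_t ≅ ℂ` (encoded as linear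
functionals injective on the socle), and let `φⱼ(f,g) = σⱼ(fg mod Iⱼ)` be the induced
pairings on `(S/(I₁∩I₂))_α × (S/(I₁∩I₂))_{t−α}`. If `(S/(I₁+I₂))_{t−α} = 0`, then for every
nonzero `λ` the left kernel of `φ₁ + λ·φ₂` is zero, i.e. any homogeneous `f` of degree `α`
paired trivially with all homogeneous `g` of degree `t−α` lies in `I₁ ∩ I₂`. -/
theorem stmt5 {n t : ℕ} (I₁ I₂ : Ideal (MvPolynomial (Fin (n + 1)) ℂ))
    (hI₁ : ∀ f ∈ I₁, ∀ e : ℕ, MvPolynomial.homogeneousComponent e f ∈ I₁)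
    (hI₂ : ∀ f ∈ I₂, ∀ e : ℕ, MvPolynomial.homogeneousComponent e f ∈ I₂)
    (hsoc₁ : finrank ℂ (qpiece I₁ t) = 1) (hsoc₂ : finrank ℂ (qpiece I₂ t) = 1)
    (hvan₁ : ∀ s : ℕ, t < s → qpiece I₁ s = ⊥) (hvan₂ : ∀ s : ℕ, t < s → qpiece I₂ s = ⊥)
    (hperf₁L : ∀ e ≤ t, ∀ a ∈ qpiece I₁ e, a ≠ 0 → ∃ b ∈ qpiece I₁ (t - e), a * b ≠ 0)
    (hperf₁R : ∀ e ≤ t, ∀ b ∈ qpiece I₁ (t - e), b ≠ 0 → ∃ a ∈ qpiece I₁ e, a * b ≠ 0)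
    (hperf₂L : ∀ e ≤ t, ∀ a ∈ qpiece I₂ e, a ≠ 0 → ∃ b ∈ qpiece I₂ (t - e), a * b ≠ 0)
    (hperf₂R : ∀ e ≤ t, ∀ b ∈ qpiece I₂ (t - e), b ≠ 0 → ∃ a ∈ qpiece I₂ e, a * b ≠ 0)
    (σ₁ : (MvPolynomial (Fin (n + 1)) ℂ ⧸ I₁) →ₗ[ℂ] ℂ)
    (σ₂ : (MvPolynomial (Fin (n + 1)) ℂ ⧸ I₂) →ₗ[ℂ] ℂ)
    (hσ₁ : ∀ a ∈ qpiece I₁ t, σ₁ a = 0 → a = 0)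
    (hσ₂ : ∀ a ∈ qpiece I₂ t, σ₂ a = 0 → a = 0)
    (α : ℕ) (hα : α ≤ t)
    (hvansum : qpiece (I₁ ⊔ I₂) (t - α) = ⊥)
    (lam : ℂ) (hlam : lam ≠ 0) :
    ∀ f ∈ MvPolynomial.homogeneousSubmodule (Fin (n + 1)) ℂ α,
      (∀ g ∈ MvPolynomial.homogeneousSubmodule (Fin (n + 1)) ℂ (t - α),
        σ₁ (Ideal.Quotient.mk I₁ (f * g)) + lam * σ₂ (Ideal.Quotient.mk I₂ (f * g)) = 0) →
      f ∈ I₁ ⊓ I₂ :=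
  stmt5_general I₁ I₂ hI₁ hI₂ hperf₁L hperf₂L σ₁ σ₂ hσ₁ hσ₂ α hα hvansum lam hlam
end

section
/- Let S = ℂ[x₀,…,xₙ] and suppose g₁,…,g_m, h₁,…,h_c (with c ≤ m) form a homogeneous regular sequence. Let I = ⟨g₁,…,g_m⟩ and J = ⟨h₁,…,h_c, g_{c+1},…,g_m⟩. Then I + J = ⟨g₁,…,g_m, h₁,…,h_c⟩ is an ideal generated by a regular sequence of length m + c, and I ∩ J = ⟨{gᵢhⱼ : 1 ≤ i,j ≤ c}⟩ + ⟨g_{c+1},…,g_m⟩. -/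
/-!
Since `g_{c+1},…,g_m` lie in `I`, the modular law gives
`I ∩ J = (I ∩ ⟨h⟩) + ⟨g_{c+1},…,g_m⟩`, and `I ∩ ⟨h⟩ = I·⟨h⟩` because `h` is a regular sequence
modulo `I`. The latter is proved for an arbitrary weakly regular sequence `as ++ bs` by induction
on `bs`: writing `f = a b + s ∈ (as)` with `s ∈ (bs)`, the inductive hypothesis for the prefix
`as ++ [b]` puts `s` in `(as)(bs) + b(bs)`, say `s = t + b u`, and then `b (a + u) ∈ (as)` forces
`a + u ∈ (as)` by regularity of `b` modulo `(as)`.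
-/

open Ideal RingTheory.Sequence

theorem Ideal.ofList_ofFn {R : Type*} [Semiring R] {n : ℕ} (f : Fin n → R) :
    ofList (List.ofFn f) = span (Set.range f) :=
  congrArg span (Set.ext fun x => List.mem_ofFn' f x)

theorem Ideal.span_range_mul_span_range_sup_span {R ι κ : Type*} [CommSemiring R]
    (g : ι → R) (h : κ → R) {p q : ι → Prop} (hpq : ∀ i, q i ∨ p i) :
    span (Set.range g) * span (Set.range h) ⊔ span {x | ∃ i, p i ∧ x = g i} =
      span ({x | ∃ i j, q i ∧ x = g i * h j} ∪ {x | ∃ i, p i ∧ x = g i}) := by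
  apply le_antisymm
  · refine sup_le ?_ (span_mono Set.subset_union_right)
    rw [span_mul_span', span_le]
    rintro _ ⟨_, ⟨i, rfl⟩, _, ⟨j, rfl⟩, rfl⟩
    rcases hpq i with hq | hp
    · exact subset_span (Or.inl ⟨i, j, hq, rfl⟩)
    · exact mul_mem_right _ _ (subset_span (Or.inr ⟨i, hp, rfl⟩))
  · rw [span_union]
    refine sup_le_sup_right ?_ _
    rw [span_le]
    rintro _ ⟨i, j, -, rfl⟩
    exact mul_mem_mul (subset_span ⟨i, rfl⟩) (subset_span ⟨j, rfl⟩)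

namespace RingTheory.Sequence.IsWeaklyRegular

variable {R : Type*} [CommRing R] {as bs : List R}

theorem mem_ofList_of_mul_mem {b x : R} (hreg : IsWeaklyRegular R (as ++ b :: bs))
    (hx : b * x ∈ ofList as) : x ∈ ofList as := by
  have hb : IsSMulRegular (R ⧸ (ofList as • ⊤ : Submodule R R)) b :=
    ((isWeaklyRegular_cons_iff _ b bs).mp ((isWeaklyRegular_append_iff R as _).mp hreg).2).1
  rw [smul_eq_mul, mul_top] at hb
  exact mem_of_isSMulRegular_quotient_of_smul_mem hb hx

theorem ofList_inf_ofList_eq_mul (hreg : IsWeaklyRegular R (as ++ bs)) :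
    ofList as ⊓ ofList bs = ofList as * ofList bs := by
  refine le_antisymm ?_ mul_le_inf
  induction bs generalizing as with
  | nil => simp
  | cons b bs ih =>
    intro f hf
    obtain ⟨hfA, hfB⟩ := Submodule.mem_inf.mp hf
    have ih' := ih (as := as ++ [b]) (by simpa using hreg)
    rw [ofList_append, ofList_singleton, Ideal.sup_mul] at ih'
    rw [ofList_cons] at hfB ⊢
    obtain ⟨v, hv, s, hs, rfl⟩ := Submodule.mem_sup.mp hfB
    obtain ⟨a, rfl⟩ := mem_span_singleton'.mp hv
    have hs' : s ∈ ofList as * ofList bs ⊔ span {b} * ofList bs := by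
      refine ih' (Submodule.mem_inf.mpr ⟨?_, hs⟩)
      rw [show s = (a * b + s) - a * b by ring]
      exact sub_mem (Submodule.mem_sup_left hfA)
        (Submodule.mem_sup_right (mem_span_singleton'.mpr ⟨a, rfl⟩))
    obtain ⟨t, ht, w, hw, rfl⟩ := Submodule.mem_sup.mp hs'
    obtain ⟨u, -, rfl⟩ := mem_span_singleton_mul.mp hw
    have hau : a + u ∈ ofList as := by
      refine hreg.mem_ofList_of_mul_mem ?_
      rw [show b * (a + u) = (a * b + (t + b * u)) - t by ring]
      exact sub_mem hfA (mul_le_left ht)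
    rw [show a * b + (t + b * u) = (a + u) * b + t by ring, Ideal.mul_sup]
    have hau_b : (a + u) * b ∈ ofList as * span {b} :=
      mul_mem_mul hau (mem_span_singleton_self b)
    exact add_mem (Submodule.mem_sup_left hau_b) (Submodule.mem_sup_right ht)

end RingTheory.Sequence.IsWeaklyRegular

theorem stmt8_general {n m c : ℕ}
    (g : Fin m → MvPolynomial (Fin (n + 1)) ℂ) (h : Fin c → MvPolynomial (Fin (n + 1)) ℂ)
    (hreg : RingTheory.Sequence.IsRegular (MvPolynomial (Fin (n + 1)) ℂ)
      (List.ofFn g ++ List.ofFn h))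
    (I J : Ideal (MvPolynomial (Fin (n + 1)) ℂ))
    (hI : I = Ideal.span (Set.range g))
    (hJ : J = Ideal.span (Set.range h ∪ {x | ∃ i : Fin m, c ≤ (i : ℕ) ∧ x = g i})) :
    I ⊔ J = Ideal.span (Set.range g ∪ Set.range h) ∧
    I ⊓ J = Ideal.span
      ({x | ∃ (i : Fin m) (j : Fin c), (i : ℕ) < c ∧ x = g i * h j} ∪
        {x | ∃ i : Fin m, c ≤ (i : ℕ) ∧ x = g i}) := by
  set K := span {x | ∃ i : Fin m, c ≤ (i : ℕ) ∧ x = g i}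
  have hKI : K ≤ I := by
    rw [hI]
    exact span_mono fun _ ⟨i, _, hx⟩ => ⟨i, hx.symm⟩
  have hJ' : J = span (Set.range h) ⊔ K := by rw [hJ, span_union]
  have hIH : I ⊓ span (Set.range h) = I * span (Set.range h) := by
    have := hreg.toIsWeaklyRegular.ofList_inf_ofList_eq_mul
    rwa [ofList_ofFn, ofList_ofFn, ← hI] at this
  constructor
  · rw [hJ', sup_left_comm, sup_eq_left.mpr hKI, sup_comm, hI, span_union]
  · rw [hJ', sup_comm, inf_comm, sup_inf_assoc_of_le _ hKI, inf_comm, hIH, sup_comm, hI]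
    exact span_range_mul_span_range_sup_span g h fun i => lt_or_ge (i : ℕ) c

/-- Subsection 2.2 of the paper: if `g₁,…,g_m,h₁,…,h_c` (`c ≤ m`) is a homogeneous regular
sequence in `S = ℂ[x₀,…,xₙ]`, `I = ⟨g₁,…,g_m⟩` and `J = ⟨h₁,…,h_c,g_{c+1},…,g_m⟩`, then
`I + J = ⟨g₁,…,g_m,h₁,…,h_c⟩` (an ideal generated by a regular sequence of length `m+c`)
and `I ∩ J = ⟨gᵢhⱼ : 1 ≤ i,j ≤ c⟩ + ⟨g_{c+1},…,g_m⟩`. -/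
theorem stmt8 {n m c : ℕ} (hcm : c ≤ m) (hmc : m + c ≤ n + 1)
    (dg : Fin m → ℕ) (dh : Fin c → ℕ)
    (g : Fin m → MvPolynomial (Fin (n + 1)) ℂ) (h : Fin c → MvPolynomial (Fin (n + 1)) ℂ)
    (hdg : ∀ i, (g i).IsHomogeneous (dg i)) (hdh : ∀ j, (h j).IsHomogeneous (dh j))
    (hreg : RingTheory.Sequence.IsRegular (MvPolynomial (Fin (n + 1)) ℂ)
      (List.ofFn g ++ List.ofFn h))
    (I J : Ideal (MvPolynomial (Fin (n + 1)) ℂ))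
    (hI : I = Ideal.span (Set.range g))
    (hJ : J = Ideal.span (Set.range h ∪ {x | ∃ i : Fin m, c ≤ (i : ℕ) ∧ x = g i})) :
    I ⊔ J = Ideal.span (Set.range g ∪ Set.range h) ∧
    I ⊓ J = Ideal.span
      ({x | ∃ (i : Fin m) (j : Fin c), (i : ℕ) < c ∧ x = g i * h j} ∪
        {x | ∃ i : Fin m, c ≤ (i : ℕ) ∧ x = g i}) :=
  stmt8_general g h hreg I J hI hJ
end

section
/- In the ring R = ℚ[x₂,x₃,x₄,x₅], let I₁ = ⟨x₂(x₂²+x₄²), x₃(x₃²+x₅²), x₄³, x₅³⟩ and I_sum = ⟨x₂, x₃, x₄³, x₅³⟩. Then dim (R/I₁)₈ = 1, the space (I_sum/I₁)₄ has dimension 18, and the symmetric bilinear form on (I_sum/I₁)₄ given by (f,g) ↦ fg ∈ (R/I₁)₈ ≅ ℚ is nondegenerate (its 18×18 Gram matrix has nonzero determinant). -/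
open MvPolynomial Module

namespace Stmt11

/-- `R = ℚ[x₂,x₃,x₄,x₅]`, with `x₂,x₃,x₄,x₅` encoded as `X 0, X 1, X 2, X 3`. -/
abbrev R := MvPolynomial (Fin 4) ℚ

/-- `I₁ = ⟨x₂(x₂²+x₄²), x₃(x₃²+x₅²), x₄³, x₅³⟩`. -/
noncomputable def I₁ : Ideal R :=
  Ideal.span {X 0 * (X 0 ^ 2 + X 2 ^ 2), X 1 * (X 1 ^ 2 + X 3 ^ 2), X 2 ^ 3, X 3 ^ 3}

/-- `I_sum = ⟨x₂, x₃, x₄³, x₅³⟩`. -/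
noncomputable def Isum : Ideal R :=
  Ideal.span {X 0, X 1, X 2 ^ 3, X 3 ^ 3}

/-- The degree-`e` graded piece of `R ⧸ I₁`. -/
noncomputable def qpiece (e : ℕ) : Submodule ℚ (R ⧸ I₁) :=
  (MvPolynomial.homogeneousSubmodule (Fin 4) ℚ e).map (Ideal.Quotient.mkₐ ℚ I₁).toLinearMap

/-- The degree-`e` piece of the image `(I_sum/I₁)` in `R ⧸ I₁`. -/
noncomputable def B (e : ℕ) : Submodule ℚ (R ⧸ I₁) :=
  ((Submodule.restrictScalars ℚ Isum) ⊓ MvPolynomial.homogeneousSubmodule (Fin 4) ℚ e).map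
    (Ideal.Quotient.mkₐ ℚ I₁).toLinearMap

/-!
Modulo `I₁` one may rewrite `x₂³ ↦ -x₂x₄²` and `x₃³ ↦ -x₃x₅²` and drop `x₄³, x₅³`; each rewrite
lowers the `x₂,x₃`-degree, so `R/I₁` is spanned by monomials with all exponents at most `2`. In
degree `8` this leaves only `x₂²x₃²x₄²x₅²`; in `(I_sum/I₁)₄` it leaves the `18` such monomials
divisible by `x₂` or `x₃`. Conversely, a linear functional `socle` that vanishes on `I₁` and is `1`
on `x₂²x₃²x₄²x₅²` shows that this monomial survives, and the Gram matrix `socle (mᵢ mⱼ)` of the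
`18` monomials has an integer inverse, which gives at once their linear independence and the
nondegeneracy of the multiplication pairing.
-/

open Finsupp (single)

section MonomialSubmodules

variable {σ K : Type*} [CommSemiring K]

theorem homogeneousSubmodule_eq_span_monomial (n : ℕ) :
    homogeneousSubmodule σ K n = Submodule.span K ((monomial · 1) '' {d | d.degree = n}) := by
  rw [homogeneousSubmodule_eq_finsupp_supported]
  exact restrictSupport_eq_span ..

theorem restrictScalars_span_monomial_inf_homogeneousSubmodule (S : Set (σ →₀ ℕ)) (n : ℕ) :
    (Ideal.span ((monomial · (1 : K)) '' S)).restrictScalars K ⊓ homogeneousSubmodule σ K n =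
      Submodule.span K ((monomial · 1) '' {d | d.degree = n ∧ ∃ s ∈ S, s ≤ d}) := by
  rw [← restrictSupport_eq_span, homogeneousSubmodule_eq_finsupp_supported]
  ext p
  change p ∈ Ideal.span _ ∧ p ∈ restrictSupport K _ ↔ p ∈ restrictSupport K _
  simp only [mem_ideal_span_monomial_image, mem_restrictSupport_iff, Set.subset_def,
    Finset.mem_coe, Set.mem_ofPred_eq, ← forall₂_and, and_comm]

theorem monomial_mul_X_mul_X_sq_add_X_sq (u : σ →₀ ℕ) (a : K) (i j : σ) :
    monomial u a * (X i * (X i ^ 2 + X j ^ 2)) =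
      monomial (u + single i 3) a + monomial (u + single i 1 + single j 2) a := by
  simp only [X, monomial_pow, monomial_mul, mul_add, mul_one, one_pow, Finsupp.smul_single,
    smul_eq_mul, add_assoc, ← Finsupp.single_add]

theorem degree_add_single_add_single (u : σ →₀ ℕ) (i j : σ) :
    (u + single i 1 + single j 2).degree = (u + single i 3).degree := by
  simp only [map_add, Finsupp.degree_single]

end MonomialSubmodules

section QuotientRelations

variable {σ K : Type*} [CommRing K] (I : Ideal (MvPolynomial σ K))

theorem map_mkₐ_span_monomial (S : Set (σ →₀ ℕ)) :
    (Submodule.span K ((monomial · (1 : K)) '' S)).map (Ideal.Quotient.mkₐ K I).toLinearMap =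
      Submodule.span K ((fun u => Ideal.Quotient.mk I (monomial u 1)) '' S) := by
  rw [Submodule.map_span, Set.image_image]
  rfl

variable {I}

theorem mk_monomial_add_single_three {i j : σ} (h : X i * (X i ^ 2 + X j ^ 2) ∈ I)
    (u : σ →₀ ℕ) :
    Ideal.Quotient.mk I (monomial (u + single i 3) 1) =
      -Ideal.Quotient.mk I (monomial (u + single i 1 + single j 2) 1) := by
  rw [eq_neg_iff_add_eq_zero, ← map_add, ← monomial_mul_X_mul_X_sq_add_X_sq,
    Ideal.Quotient.eq_zero_iff_mem]
  exact I.mul_mem_left _ h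

theorem mk_monomial_add_single_eq_zero {i : σ} {k : ℕ} (h : X i ^ k ∈ I) (u : σ →₀ ℕ) :
    Ideal.Quotient.mk I (monomial (u + single i k) 1) = 0 := by
  rw [← mul_one (1 : K), ← monomial_mul, ← X_pow_eq_monomial, Ideal.Quotient.eq_zero_iff_mem]
  exact I.mul_mem_left _ h

end QuotientRelations

theorem LinearMap.map_eq_zero_of_mem_ideal_span {K A M : Type*} [CommSemiring K] [CommSemiring A]
    [Algebra K A] [AddCommMonoid M] [Module K M] (f : A →ₗ[K] M) {S : Set A}
    (hS : ∀ s ∈ S, ∀ q, f (q * s) = 0) {p : A} (hp : p ∈ Ideal.span S) : f p = 0 := by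
  suffices ∀ q, f (q * p) = 0 by simpa using this 1
  induction hp using Submodule.span_induction with
  | mem s hs => exact hS s hs
  | zero => simp
  | add x y _ _ hx hy => intro q; rw [mul_add, map_add, hx, hy, add_zero]
  | smul a x _ hx => intro q; rw [smul_eq_mul, ← mul_assoc]; exact hx _

def generators₁ : Set R := {X 0 * (X 0 ^ 2 + X 2 ^ 2), X 1 * (X 1 ^ 2 + X 3 ^ 2), X 2 ^ 3, X 3 ^ 3}

theorem generator_mem_I₁ {g : R} (hg : g ∈ generators₁) : g ∈ I₁ :=
  Ideal.subset_span hg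

/- `c(x⁴) - c(x²y²)` is a functional on `ℚ[x,y]` vanishing on `⟨x(x² + y²), y³⟩`; since `R/I₁` is
the tensor product of two copies of `ℚ[x,y]/⟨x(x² + y²), y³⟩` (in `x₂,x₄` and in `x₃,x₅`), `socle`
is taken to be the product of the two functionals. -/
def socleWeight₂ (a c : ℕ) : ℤ :=
  if a = 4 ∧ c = 0 then 1 else if a = 2 ∧ c = 2 then -1 else 0

theorem socleWeight₂_add_three (a c : ℕ) :
    socleWeight₂ (a + 3) c = -socleWeight₂ (a + 1) (c + 2) := by
  unfold socleWeight₂; split_ifs <;> simp_all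

theorem socleWeight₂_right_add_three (a c : ℕ) : socleWeight₂ a (c + 3) = 0 := by
  unfold socleWeight₂; split_ifs <;> simp_all

def socleWeight (v : Fin 4 → ℕ) : ℤ := socleWeight₂ (v 0) (v 2) * socleWeight₂ (v 1) (v 3)

noncomputable def socle : R →ₗ[ℚ] ℚ :=
  Finsupp.linearCombination ℚ (fun u : Fin 4 →₀ ℕ => (socleWeight u : ℚ)) ∘ₗ
    (AddMonoidAlgebra.coeffLinearEquiv ℚ).toLinearMap

theorem socle_monomial (u : Fin 4 →₀ ℕ) (a : ℚ) : socle (monomial u a) = a * socleWeight u := by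
  simp [socle, monomial, AddMonoidAlgebra.coeff_single]

theorem socle_mul_generator {g : R} (hg : g ∈ generators₁) (q : R) : socle (q * g) = 0 := by
  induction q using MvPolynomial.induction_on' with
  | monomial u a =>
    rcases hg with rfl | rfl | rfl | rfl <;>
      first | rw [monomial_mul_X_mul_X_sq_add_X_sq] | rw [X_pow_eq_monomial, monomial_mul]
    all_goals simp [socle_monomial, socleWeight, socleWeight₂_add_three,
      socleWeight₂_right_add_three]
  | add p q hp hq => rw [add_mul, map_add, hp, hq, add_zero]

theorem socle_eq_zero_of_mem {p : R} (hp : p ∈ I₁) : socle p = 0 :=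
  LinearMap.map_eq_zero_of_mem_ideal_span socle (fun _ hg => socle_mul_generator hg) hp

local notation "π" => Ideal.Quotient.mk I₁

theorem mk_monomial_mem_of_reduced (M : Submodule ℚ (R ⧸ I₁)) (P : (Fin 4 →₀ ℕ) → Prop)
    (hP₀ : ∀ u, P (u + single 0 3) → P (u + single 0 1 + single 2 2))
    (hP₁ : ∀ u, P (u + single 1 3) → P (u + single 1 1 + single 3 2))
    (hM : ∀ u, P u → (∀ i, u i ≤ 2) → π (monomial u 1) ∈ M) (u : Fin 4 →₀ ℕ) (hu : P u) :
    π (monomial u 1) ∈ M := by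
  induction hn : u 0 + u 1 using Nat.strong_induction_on generalizing u with
  | _ n ih =>
  by_cases hred : ∀ i, u i ≤ 2
  · exact hM u hu hred
  push Not at hred
  obtain ⟨i, hi⟩ := hred
  obtain ⟨v, rfl⟩ : ∃ v, u = v + single i 3 :=
    ⟨u - single i 3, (tsub_add_cancel_of_le (Finsupp.single_le_iff.mpr hi)).symm⟩
  obtain rfl | rfl | rfl | rfl : i = 0 ∨ i = 1 ∨ i = 2 ∨ i = 3 := by fin_cases i <;> simp
  · rw [mk_monomial_add_single_three (j := 2) (generator_mem_I₁ (by simp [generators₁]))]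
    exact M.neg_mem (ih _ (by simp at hn ⊢; omega) _ (hP₀ v hu) rfl)
  · rw [mk_monomial_add_single_three (j := 3) (generator_mem_I₁ (by simp [generators₁]))]
    exact M.neg_mem (ih _ (by simp at hn ⊢; omega) _ (hP₁ v hu) rfl)
  all_goals
    rw [mk_monomial_add_single_eq_zero (generator_mem_I₁ (by simp [generators₁]))]
    exact M.zero_mem

noncomputable def socleExp : Fin 4 →₀ ℕ := Finsupp.equivFunOnFinite.symm 2

theorem degree_socleExp : socleExp.degree = 8 := by
  simp [socleExp, Finsupp.degree_eq_sum]

theorem eq_socleExp {u : Fin 4 →₀ ℕ} (hu : u.degree = 8) (hred : ∀ i, u i ≤ 2) :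
    u = socleExp := by
  rw [Finsupp.degree_eq_sum, Fin.sum_univ_four] at hu
  have := hred 0; have := hred 1; have := hred 2; have := hred 3
  ext i
  fin_cases i <;> simp [socleExp] <;> omega

theorem mk_monomial_socleExp_ne_zero : π (monomial socleExp 1) ≠ 0 := by
  intro h
  have := socle_eq_zero_of_mem (Ideal.Quotient.eq_zero_iff_mem.mp h)
  simp [socle_monomial, socleExp, socleWeight, socleWeight₂] at this

theorem qpiece_eight_eq : qpiece 8 = ℚ ∙ π (monomial socleExp 1) := by
  rw [qpiece, homogeneousSubmodule_eq_span_monomial, map_mkₐ_span_monomial]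
  apply le_antisymm
  · rw [Submodule.span_le]
    rintro _ ⟨u, hu, rfl⟩
    refine mk_monomial_mem_of_reduced _ (fun d => d.degree = 8)
      (fun v hv => (degree_add_single_add_single v 0 2).trans hv)
      (fun v hv => (degree_add_single_add_single v 1 3).trans hv) ?_ u hu
    intro v hv hred
    rw [eq_socleExp hv hred]
    exact Submodule.mem_span_singleton_self _
  · exact Submodule.span_mono (Set.singleton_subset_iff.mpr ⟨socleExp, degree_socleExp, rfl⟩)

theorem finrank_qpiece_eight : finrank ℚ (qpiece 8) = 1 := by
  rw [qpiece_eight_eq, finrank_span_singleton mk_monomial_socleExp_ne_zero]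

def isumExps : Set (Fin 4 →₀ ℕ) := {single 0 1, single 1 1, single 2 3, single 3 3}

theorem Isum_eq_span_monomial : Isum = Ideal.span ((monomial · 1) '' isumExps) := by
  simp only [Isum, isumExps, Set.image_insert_eq, Set.image_singleton, X_pow_eq_monomial]
  rfl

def basisExp : Fin 18 → Fin 4 → ℕ :=
  ![![0,1,1,2], ![0,1,2,1], ![0,2,0,2], ![0,2,1,1], ![0,2,2,0], ![1,0,1,2],
    ![1,0,2,1], ![1,1,0,2], ![1,1,1,1], ![1,1,2,0], ![1,2,0,1], ![1,2,1,0],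
    ![2,0,0,2], ![2,0,1,1], ![2,0,2,0], ![2,1,0,1], ![2,1,1,0], ![2,2,0,0]]

noncomputable def basisMonomial (j : Fin 18) : R ⧸ I₁ :=
  π (monomial (Finsupp.equivFunOnFinite.symm (basisExp j)) 1)

theorem exists_basisExp_eq {u : Fin 4 →₀ ℕ} (hu : u.degree = 4) (h01 : u 0 ≠ 0 ∨ u 1 ≠ 0)
    (hred : ∀ i, u i ≤ 2) : ∃ j, u = Finsupp.equivFunOnFinite.symm (basisExp j) := by
  have key : ∀ a b c d : Fin 3, a.val + b.val + c.val + d.val = 4 → (a.val ≠ 0 ∨ b.val ≠ 0) →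
      ∃ j, basisExp j = ![a.val, b.val, c.val, d.val] := by decide
  rw [Finsupp.degree_eq_sum, Fin.sum_univ_four] at hu
  obtain ⟨j, hj⟩ := key ⟨u 0, by grind⟩ ⟨u 1, by grind⟩ ⟨u 2, by grind⟩ ⟨u 3, by grind⟩ hu h01
  refine ⟨j, ?_⟩
  ext i
  fin_cases i <;> simp [hj]

theorem B_four_eq_span : B 4 = Submodule.span ℚ (Set.range basisMonomial) := by
  rw [B, Isum_eq_span_monomial, restrictScalars_span_monomial_inf_homogeneousSubmodule,
    map_mkₐ_span_monomial]
  apply le_antisymm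
  · rw [Submodule.span_le]
    rintro _ ⟨u, hu, rfl⟩
    refine mk_monomial_mem_of_reduced _ (fun d => d.degree = 4 ∧ ∃ s ∈ isumExps, s ≤ d)
      (fun v hv => ⟨(degree_add_single_add_single v 0 2).trans hv.1, single 0 1, by simp [isumExps],
        le_add_self.trans le_self_add⟩)
      (fun v hv => ⟨(degree_add_single_add_single v 1 3).trans hv.1, single 1 1, by simp [isumExps],
        le_add_self.trans le_self_add⟩) ?_ u hu
    intro v hv hred
    simp only [isumExps, Set.mem_insert_iff, Set.mem_singleton_iff, exists_eq_or_imp,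
      exists_eq_left, Finsupp.single_le_iff] at hv
    obtain ⟨j, rfl⟩ := exists_basisExp_eq hv.1 (by have := hred 2; have := hred 3; omega) hred
    exact Submodule.subset_span ⟨j, rfl⟩
  · rw [Submodule.span_le]
    rintro _ ⟨j, rfl⟩
    refine Submodule.subset_span ⟨_, ?_, rfl⟩
    have hdeg : ∀ j, basisExp j 0 + basisExp j 1 + basisExp j 2 + basisExp j 3 = 4 := by decide
    have h01 : ∀ j, 1 ≤ basisExp j 0 ∨ 1 ≤ basisExp j 1 := by decide
    simp only [isumExps, Set.mem_ofPred_eq, Finsupp.degree_eq_sum, Fin.sum_univ_four,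
      Set.mem_insert_iff, Set.mem_singleton_iff, exists_eq_or_imp, exists_eq_left, Finsupp.single_le_iff,
      Finsupp.coe_equivFunOnFinite_symm]
    exact ⟨hdeg j, (h01 j).imp_right Or.inl⟩

def gram : Matrix (Fin 18) (Fin 18) ℤ :=
  .of fun i j => socleWeight (basisExp i + basisExp j)

def gramInv : Matrix (Fin 18) (Fin 18) ℤ :=
  !![0, 0, 0, 0, 0, 0, 0, 0, 0, 0, 0, 0, 0, 0, 0, 0, 1, 0;
      0, 1, 0, 0, 0, 0, 0, 0, 0, 0, 0, 0, 0, 0, 0, 1, 0, 0;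
      0, 0, 0, 0, 0, 0, 0, 0, 0, 0, 0, 0, 0, 0, 1, 0, 0, 0;
      0, 0, 0, 0, 0, 0, 0, 0, 0, 0, 0, 0, 0, 1, 0, 0, 0, 0;
      0, 0, 0, 0, -1, 0, 0, 0, 0, 0, 0, 0, 0, 0, 0, 0, 0, -1;
      0, 0, 0, 0, 0, 1, 0, 0, 0, 0, 0, 1, 0, 0, 0, 0, 0, 0;
      0, 0, 0, 0, 0, 0, 0, 0, 0, 0, 1, 0, 0, 0, 0, 0, 0, 0;
      0, 0, 0, 0, 0, 0, 0, 0, 0, 1, 0, 0, 0, 0, 0, 0, 0, 0;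
      0, 0, 0, 0, 0, 0, 0, 0, 1, 0, 0, 0, 0, 0, 0, 0, 0, 0;
      0, 0, 0, 0, 0, 0, 0, 1, 0, 0, 0, 0, 0, 0, 0, 0, 0, 0;
      0, 0, 0, 0, 0, 0, 1, 0, 0, 0, 0, 0, 0, 0, 0, 0, 0, 0;
      0, 0, 0, 0, 0, 1, 0, 0, 0, 0, 0, 0, 0, 0, 0, 0, 0, 0;
      0, 0, 0, 0, 0, 0, 0, 0, 0, 0, 0, 0, -1, 0, 0, 0, 0, -1;
      0, 0, 0, 1, 0, 0, 0, 0, 0, 0, 0, 0, 0, 0, 0, 0, 0, 0;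
      0, 0, 1, 0, 0, 0, 0, 0, 0, 0, 0, 0, 0, 0, 0, 0, 0, 0;
      0, 1, 0, 0, 0, 0, 0, 0, 0, 0, 0, 0, 0, 0, 0, 0, 0, 0;
      1, 0, 0, 0, 0, 0, 0, 0, 0, 0, 0, 0, 0, 0, 0, 0, 0, 0;
      0, 0, 0, 0, -1, 0, 0, 0, 0, 0, 0, 0, -1, 0, 0, 0, 0, -1]

theorem gram_mul_gramInv : gram * gramInv = 1 := by decide

theorem sum_mul_gram_eq_zero (c : Fin 18 → ℚ) (i : Fin 18)
    (h : (∑ j, c j • basisMonomial j) * basisMonomial i = 0) :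
    ∑ j, c j * (gram j i : ℚ) = 0 := by
  set p : R := ∑ j, c j • (monomial (Finsupp.equivFunOnFinite.symm (basisExp j)) 1 *
    monomial (Finsupp.equivFunOnFinite.symm (basisExp i)) 1)
  have hp : π p = (∑ j, c j • basisMonomial j) * basisMonomial i := by
    simp only [p, map_sum, map_rat_smul, map_mul, Finset.sum_mul, smul_mul_assoc, basisMonomial]
  have := socle_eq_zero_of_mem (Ideal.Quotient.eq_zero_iff_mem.mp (hp.trans h))
  simpa [p, monomial_mul, socle_monomial, gram] using this

theorem eq_zero_of_forall_mul_basisMonomial_eq_zero (c : Fin 18 → ℚ)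
    (h : ∀ i, (∑ j, c j • basisMonomial j) * basisMonomial i = 0) : c = 0 := by
  let G := (Int.castRingHom ℚ).mapMatrix gram
  let G' := (Int.castRingHom ℚ).mapMatrix gramInv
  have hG : G * G' = 1 := by rw [← map_mul, gram_mul_gramInv, map_one]
  have hc : Matrix.vecMul c G = 0 := funext fun i => by
    simpa [G, Matrix.vecMul, dotProduct] using sum_mul_gram_eq_zero c i (h i)
  calc c = Matrix.vecMul c (G * G') := by rw [hG, Matrix.vecMul_one]
    _ = 0 := by rw [← Matrix.vecMul_vecMul, hc, Matrix.zero_vecMul]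

theorem linearIndependent_basisMonomial : LinearIndependent ℚ basisMonomial :=
  Fintype.linearIndependent_iff.mpr fun c hc =>
    congrFun (eq_zero_of_forall_mul_basisMonomial_eq_zero c fun i => by rw [hc, zero_mul])

/-- Example 4.3 of the paper (`d = 4`, `c = 2`, `k = 3`): `dim (R/I₁)₈ = 1`,
`dim (I_sum/I₁)₄ = 18`, and the symmetric multiplication form
`(I_sum/I₁)₄ × (I_sum/I₁)₄ → (R/I₁)₈ ≅ ℚ` is nondegenerate. -/
theorem stmt11 :
    finrank ℚ (qpiece 8) = 1 ∧
    finrank ℚ (B 4) = 18 ∧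
    ∀ a ∈ B 4, (∀ b ∈ B 4, a * b = 0) → a = 0 := by
  refine ⟨finrank_qpiece_eight, ?_, fun a ha hab => ?_⟩
  · rw [B_four_eq_span, finrank_span_eq_card linearIndependent_basisMonomial, Fintype.card_fin]
  · rw [B_four_eq_span] at ha hab
    obtain ⟨c, rfl⟩ := (Submodule.mem_span_range_iff_exists_fun ℚ).mp ha
    rw [eq_zero_of_forall_mul_basisMonomial_eq_zero c fun i =>
      hab _ (Submodule.subset_span ⟨i, rfl⟩)]
    simp

end Stmt11
end

section
/- Let V, W be finite-dimensional complex vector spaces with dim V = dim W = 2r − 1 (odd), and let φ₁, φ₂ : V × W → ℂ be bilinear with rank φ₁ = rank φ₂ = r, ker_L(φ₁) ∩ ker_L(φ₂) = 0, ker_R(φ₁) ∩ ker_R(φ₂) = 0, and suppose the restriction of φ₂ to ker_L(φ₁) × ker_R(φ₁) has zero left kernel (hence rank r − 1), and symmetrically the restriction of φ₁ to ker_L(φ₂) × ker_R(φ₂) has rank r − 1. Then there is at most one nonzero t ∈ ℂ with rank(φ₁ + t·φ₂) < 2r − 1. -/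
/-! In bases of `V` and `W`, `P(t) = det (φ + t • ψ)` is a polynomial in `t`. If the basis of
`V` extends a basis of `ker φ`, the corresponding rows of `φ` vanish, so
`P = X ^ dim (ker φ) * Q`, where `Q(0)` is the determinant of the form equal to `ψ` on `ker φ`
and to `φ` on a complement; that form is nondegenerate precisely because `ψ` restricted to
`ker φ × ker φ.flip` has no left kernel. If the basis of `W` extends a basis of `ker ψ.flip`,
the corresponding columns of `ψ` vanish, so `deg P ≤ dim W - dim (ker ψ.flip)`. The nonzero `t`
where `φ + t • ψ` degenerates are thus roots of `Q ≠ 0`, whose degree is at most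
`dim V - dim (ker φ) - dim (ker ψ.flip)`; under the rank hypotheses this is
`(2r - 1) - (r - 1) - (r - 1) = 1`. -/

open Module Polynomial

namespace Matrix

variable {n R : Type*} [Fintype n] [DecidableEq n] [CommRing R]

theorem natDegree_det_le_sum (M : Matrix n n R[X]) (d : n → ℕ)
    (h : ∀ i j, (M i j).natDegree ≤ d j) : M.det.natDegree ≤ ∑ j, d j := by
  rw [det_apply]
  refine natDegree_sum_le_of_forall_le _ _ fun σ _ => ?_
  rw [Units.smul_def]
  refine (natDegree_smul_le _ _).trans ((natDegree_prod_le _ _).trans ?_)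
  exact Finset.sum_le_sum fun i _ => h (σ i) i

theorem natDegree_det_X_smul_add_C_le (A B : Matrix n n R) (s : Finset n)
    (hA : ∀ i, ∀ j ∈ s, A i j = 0) :
    ((X : R[X]) • A.map C + B.map C).det.natDegree ≤ sᶜ.card := by
  classical
  have := natDegree_det_le_sum ((X : R[X]) • A.map C + B.map C)
    (fun j => if j ∈ sᶜ then 1 else 0) fun i j => by
      by_cases hj : j ∈ s
      · simp [hj, hA i j hj]
      · simp only [Finset.mem_compl, hj, not_false_eq_true, if_true, add_apply, smul_apply,
          map_apply, smul_eq_mul]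
        compute_degree
  rwa [Finset.sum_ite_mem, Finset.univ_inter, Finset.sum_const, smul_eq_mul, mul_one] at this

theorem exists_det_X_smul_add_C_eq_X_pow_mul (A B : Matrix n n R) (s : Finset n)
    (hB : ∀ i ∈ s, B i = 0) :
    ∃ Q : R[X], ((X : R[X]) • A.map C + B.map C).det = X ^ s.card * Q ∧
      Q.eval 0 = (of fun i => if i ∈ s then A i else B i).det := by
  let M' : Matrix n n R[X] :=
    of fun i => if i ∈ s then A.map (C : R →+* R[X]) i else ((X : R[X]) • A.map C + B.map C) i
  refine ⟨M'.det, ?_, ?_⟩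
  · have : (X : R[X]) • A.map C + B.map C =
        diagonal (fun i => if i ∈ s then (X : R[X]) else 1) * M' := by
      ext i j
      by_cases hi : i ∈ s <;> simp [M', hi, hB i]
    rw [this, det_mul, det_diagonal, Finset.prod_ite_mem, Finset.univ_inter, Finset.prod_const]
  · rw [← coe_evalRingHom, RingHom.map_det]
    congr 1
    ext i j
    by_cases hi : i ∈ s <;> simp [M', hi]

end Matrix

theorem Polynomial.encard_setOf_isRoot_le {R : Type*} [CommRing R] [IsDomain R] {p : R[X]}
    (hp : p ≠ 0) : {x | p.IsRoot x}.encard ≤ p.natDegree := by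
  classical
  have : {x | p.IsRoot x} = ↑p.roots.toFinset := by
    ext
    simp [mem_roots hp]
  rw [this, Set.encard_coe_eq_coe_finsetCard, Nat.cast_le]
  exact (Multiset.toFinset_card_le _).trans (card_roots' p)

open LinearMap Submodule

section Bilinear

variable {K V W : Type*} [Field K] [AddCommGroup V] [Module K V] [AddCommGroup W] [Module K W]

theorem LinearMap.det_toMatrix₂_ne_zero_iff {ι : Type*} [Fintype ι] [DecidableEq ι]
    (b : Basis ι K V) (c : Basis ι K W) (B : V →ₗ[K] W →ₗ[K] K) :
    (toMatrix₂ b c B).det ≠ 0 ↔ ker B = ⊥ := by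
  rw [← Matrix.separatingLeft_iff_det_ne_zero, separatingLeft_toMatrix₂_iff,
    separatingLeft_iff_ker_eq_bot]

theorem LinearMap.finrank_range_lt_iff_ker_ne_bot_s17 {M : Type*} [AddCommGroup M] [Module K M]
    [FiniteDimensional K V] (f : V →ₗ[K] M) :
    finrank K (range f) < finrank K V ↔ ker f ≠ ⊥ := by
  rw [← finrank_range_add_finrank_ker f, Ne, ← Submodule.finrank_eq_zero]
  omega

theorem LinearMap.finrank_range_flip_s17 [FiniteDimensional K V] [FiniteDimensional K W]
    (B : V →ₗ[K] W →ₗ[K] K) : finrank K (range B.flip) = finrank K (range B) := by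
  have : range B.flip = range B.dualMap :=
    range_comp_of_range_eq_top B.dualMap (evalEquiv K W).range
  rw [this, finrank_range_dualMap_eq_finrank_range]

theorem Submodule.exists_basis_mem_of_isCompl [FiniteDimensional K V] {ι : Type*} [Fintype ι]
    (hι : Fintype.card ι = finrank K V) {U U' : Submodule K V} (h : IsCompl U U') :
    ∃ (b : Basis ι K V) (s : Finset ι), s.card = finrank K U ∧
      (∀ i ∈ s, b i ∈ U) ∧ ∀ i ∉ s, b i ∈ U' := by
  let b₀ := ((finBasis K U).prod (finBasis K U')).map (prodEquivOfIsCompl U U' h)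
  let σ : Fin (finrank K U) ⊕ Fin (finrank K U') ≃ ι := Fintype.equivOfCardEq <| by
    rw [Fintype.card_sum, Fintype.card_fin, Fintype.card_fin, hι, finrank_add_eq_of_isCompl h]
  refine ⟨b₀.reindex σ, Finset.univ.map (Function.Embedding.inl.trans σ.toEmbedding), by simp,
    ?_, fun i hi => ?_⟩
  · simp [b₀]
  · obtain ⟨k, rfl⟩ : ∃ k, σ (Sum.inr k) = i := by
      rcases hk : σ.symm i with k | k
      · exact absurd (Finset.mem_map.2 ⟨k, Finset.mem_univ _, by simp [← hk]⟩) hi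
      · exact ⟨k, by simp [← hk]⟩
    simp [b₀]

theorem LinearMap.ker_ofIsCompl_domRestrict_eq_bot (φ ψ : V →ₗ[K] W →ₗ[K] K)
    {U : Submodule K V} (h : IsCompl (ker φ) U)
    (hψ : ker (ψ.domRestrict₁₂ (ker φ) (ker φ.flip)) = ⊥) :
    ker (ofIsCompl h (ψ.domRestrict (ker φ)) (φ.domRestrict U)) = ⊥ := by
  refine eq_bot_iff.2 fun v hv => ?_
  obtain ⟨u, hu, w, hw, rfl⟩ := mem_sup.1 (h.sup_eq_top ▸ mem_top : v ∈ ker φ ⊔ U)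
  have hχ : ψ u + φ w = 0 := by
    have := mem_ker.1 hv
    rwa [map_add, show u = ((⟨u, hu⟩ : ker φ) : V) from rfl, ofIsCompl_apply_left,
      show w = ((⟨w, hw⟩ : U) : V) from rfl, ofIsCompl_apply_right] at this
  have hu0 : u = 0 := by
    have : (⟨u, hu⟩ : ker φ) ∈ ker (ψ.domRestrict₁₂ (ker φ) (ker φ.flip)) :=
      mem_ker.2 <| LinearMap.ext fun z => by
        have hz : φ w z = 0 := congrArg (· w) (mem_ker.1 z.2)
        simpa [hz, domRestrict₁₂_apply] using congrArg (· z) hχ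
    rw [hψ, mem_bot] at this
    exact congrArg Subtype.val this
  subst hu0
  have hw0 : w ∈ ker φ := by simpa using hχ
  simpa using (disjoint_def.1 h.disjoint w hw0 hw)

section Pencil

variable {ι : Type*} [Fintype ι] [DecidableEq ι] (b : Basis ι K V) (c : Basis ι K W)
  (φ ψ : V →ₗ[K] W →ₗ[K] K)

noncomputable def LinearMap.pencilDet : K[X] :=
  ((X : K[X]) • (toMatrix₂ b c ψ).map C + (toMatrix₂ b c φ).map C).det

theorem LinearMap.eval_pencilDet (t : K) :
    (pencilDet b c φ ψ).eval t = (toMatrix₂ b c (φ + t • ψ)).det := by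
  rw [pencilDet, ← coe_evalRingHom, RingHom.map_det]
  congr 1
  ext i j
  simp only [Matrix.add_apply, Matrix.smul_apply, Matrix.map_apply, smul_eq_mul,
    RingHom.mapMatrix_apply, coe_evalRingHom, eval_mul, eval_X, eval_C, map_add,
    toMatrix₂_apply, add_apply, smul_apply]
  ring

theorem LinearMap.finrank_range_add_smul_lt_iff [FiniteDimensional K V] (t : K) :
    finrank K (range (φ + t • ψ)) < finrank K V ↔ (pencilDet b c φ ψ).eval t = 0 := by
  rw [finrank_range_lt_iff_ker_ne_bot_s17, eval_pencilDet, ← not_iff_not, not_not,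
    ← det_toMatrix₂_ne_zero_iff b c, Ne]

theorem LinearMap.natDegree_pencilDet_le (s : Finset ι) (hc : ∀ j ∈ s, c j ∈ ker ψ.flip) :
    (pencilDet b c φ ψ).natDegree ≤ sᶜ.card :=
  Matrix.natDegree_det_X_smul_add_C_le _ _ s fun i j hj => by
    simpa using congrArg (· (b i)) (mem_ker.1 (hc j hj))

theorem LinearMap.exists_pencilDet_eq_X_pow_mul {U : Submodule K V} (h : IsCompl (ker φ) U)
    (hψ : ker (ψ.domRestrict₁₂ (ker φ) (ker φ.flip)) = ⊥) (s : Finset ι)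
    (hbs : ∀ i ∈ s, b i ∈ ker φ) (hbU : ∀ i ∉ s, b i ∈ U) :
    ∃ Q : K[X], pencilDet b c φ ψ = X ^ s.card * Q ∧ Q.eval 0 ≠ 0 := by
  obtain ⟨Q, hPQ, hQ⟩ := Matrix.exists_det_X_smul_add_C_eq_X_pow_mul
    (toMatrix₂ b c ψ) (toMatrix₂ b c φ) s fun i hi => by
      ext j
      simp [mem_ker.1 (hbs i hi)]
  refine ⟨Q, hPQ, ?_⟩
  let χ := ofIsCompl h (ψ.domRestrict (ker φ)) (φ.domRestrict U)
  have hmixed :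
      Matrix.of (fun i => if i ∈ s then toMatrix₂ b c ψ i else toMatrix₂ b c φ i) =
        toMatrix₂ b c χ := by
    ext i j
    by_cases hi : i ∈ s
    · have hχ : χ (b i) = ψ (b i) := ofIsCompl_apply_left h ⟨b i, hbs i hi⟩
      simp [hi, hχ]
    · have hχ : χ (b i) = φ (b i) := ofIsCompl_apply_right h ⟨b i, hbU i hi⟩
      simp [hi, hχ]
  rw [hQ, hmixed, det_toMatrix₂_ne_zero_iff]
  exact ker_ofIsCompl_domRestrict_eq_bot φ ψ h hψ

end Pencil

theorem LinearMap.encard_setOf_finrank_range_add_smul_lt_le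
    [FiniteDimensional K V] [FiniteDimensional K W]
    (hVW : finrank K V = finrank K W) (φ ψ : V →ₗ[K] W →ₗ[K] K)
    (hψ : ker (ψ.domRestrict₁₂ (ker φ) (ker φ.flip)) = ⊥) :
    {t : K | t ≠ 0 ∧ finrank K (range (φ + t • ψ)) < finrank K V}.encard ≤
      finrank K V - finrank K (ker φ) - finrank K (ker ψ.flip) := by
  obtain ⟨U, hU⟩ := (ker φ).exists_isCompl
  obtain ⟨U', hU'⟩ := (ker ψ.flip).exists_isCompl
  obtain ⟨b, s, hs, hbs, hbU⟩ := exists_basis_mem_of_isCompl (Fintype.card_fin _) hU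
  obtain ⟨c, s', hs', hcs', -⟩ :=
    exists_basis_mem_of_isCompl (ι := Fin (finrank K V)) (by simp [hVW]) hU'
  obtain ⟨Q, hPQ, hQ0⟩ := exists_pencilDet_eq_X_pow_mul b c φ ψ hU hψ s hbs hbU
  have hQ : Q ≠ 0 := by
    rintro rfl
    simp at hQ0
  have hdeg : Q.natDegree ≤ finrank K V - finrank K (ker φ) - finrank K (ker ψ.flip) := by
    have := natDegree_pencilDet_le b c φ ψ s' hcs'
    rw [hPQ, natDegree_mul (pow_ne_zero _ X_ne_zero) hQ, natDegree_X_pow, Finset.card_compl,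
      Fintype.card_fin] at this
    omega
  refine (Set.encard_le_encard ?_).trans
    ((encard_setOf_isRoot_le hQ).trans (by exact_mod_cast hdeg))
  rintro t ⟨ht, hlt⟩
  rw [finrank_range_add_smul_lt_iff b c, hPQ, eval_mul, eval_pow, eval_X] at hlt
  exact (mul_eq_zero.1 hlt).resolve_left (pow_ne_zero _ ht)

end Bilinear

theorem stmt17_general {V W : Type} [AddCommGroup V] [Module ℂ V] [FiniteDimensional ℂ V]
    [AddCommGroup W] [Module ℂ W] [FiniteDimensional ℂ W]
    (r : ℕ)
    (hdV : finrank ℂ V = 2 * r - 1) (hdW : finrank ℂ W = 2 * r - 1)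
    (φ₁ φ₂ : V →ₗ[ℂ] W →ₗ[ℂ] ℂ)
    (hr₁ : finrank ℂ (LinearMap.range φ₁) = r)
    (hr₂ : finrank ℂ (LinearMap.range φ₂) = r)
    (hs₁ : LinearMap.ker
      (LinearMap.domRestrict₁₂ φ₂ (LinearMap.ker φ₁) (LinearMap.ker φ₁.flip)) = ⊥) :
    {t : ℂ | t ≠ 0 ∧
      finrank ℂ (LinearMap.range (φ₁ + t • φ₂)) < 2 * r - 1}.Subsingleton := by
  have hker₁ := finrank_range_add_finrank_ker φ₁
  have hker₂ := finrank_range_add_finrank_ker φ₂.flip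
  rw [finrank_range_flip_s17] at hker₂
  have h := encard_setOf_finrank_range_add_smul_lt_le (hdV.trans hdW.symm) φ₁ φ₂ hs₁
  rw [hdV] at h
  rw [← Set.encard_le_one_iff_subsingleton]
  exact h.trans (by norm_cast; omega)

/-- Remark 2.5 of the paper: if `dim V = dim W = 2r - 1`, `rank φ₁ = rank φ₂ = r`,
the kernels intersect trivially, and both restricted pairings have maximal rank `r - 1`
(the restriction of `φ₂` to `ker_L φ₁ × ker_R φ₁` having zero left kernel), then there
is at most one nonzero `t ∈ ℂ` with `rank (φ₁ + t • φ₂) < 2r - 1`. -/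
theorem stmt17 {V W : Type} [AddCommGroup V] [Module ℂ V] [FiniteDimensional ℂ V]
    [AddCommGroup W] [Module ℂ W] [FiniteDimensional ℂ W]
    (r : ℕ) (hr : 1 ≤ r)
    (hdV : finrank ℂ V = 2 * r - 1) (hdW : finrank ℂ W = 2 * r - 1)
    (φ₁ φ₂ : V →ₗ[ℂ] W →ₗ[ℂ] ℂ)
    (hr₁ : finrank ℂ (LinearMap.range φ₁) = r)
    (hr₂ : finrank ℂ (LinearMap.range φ₂) = r)
    (hV : LinearMap.ker φ₁ ⊓ LinearMap.ker φ₂ = ⊥)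
    (hW : LinearMap.ker φ₁.flip ⊓ LinearMap.ker φ₂.flip = ⊥)
    (hs₁ : LinearMap.ker
      (LinearMap.domRestrict₁₂ φ₂ (LinearMap.ker φ₁) (LinearMap.ker φ₁.flip)) = ⊥)
    (hs₁' : finrank ℂ (LinearMap.range
      (LinearMap.domRestrict₁₂ φ₂ (LinearMap.ker φ₁) (LinearMap.ker φ₁.flip))) = r - 1)
    (hs₂ : finrank ℂ (LinearMap.range
      (LinearMap.domRestrict₁₂ φ₁ (LinearMap.ker φ₂) (LinearMap.ker φ₂.flip))) = r - 1) :
    {t : ℂ | t ≠ 0 ∧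
      finrank ℂ (LinearMap.range (φ₁ + t • φ₂)) < 2 * r - 1}.Subsingleton :=
  stmt17_general r hdV hdW φ₁ φ₂ hr₁ hr₂ hs₁
end
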